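/- arXiv:1611.09909 — 7 statements merged into one kernel-verified Lean document; each statement's English description precedes it below -/
import Mathlib

section
/- Let p₁,…,pₙ ∈ D_Δ. For every permutation σ ∈ S_n and every 1 ≤ j < n, the coefficients A_σ satisfy A_{σ∘(j,j+1)} / A_σ = −exp(i Θ(p_{σ(j)}, p_{σ(j+1)})), where (j,j+1) is the transposition exchanging j and j+1 (provided A_σ ≠ 0; equivalently, A_{σ∘(j,j+1)} = −exp(i Θ(p_{σ(j)}, p_{σ(j+1)})) · A_σ). -/
open scoped BigOperators
open Complex

noncomputable section

/-- `S(x,y) = e^{-ix} + e^{iy} - 2*Delta`. -/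
def Sfun (Δ x y : ℝ) : ℂ :=
  Complex.exp (-(Complex.I * (x : ℂ))) + Complex.exp (Complex.I * (y : ℂ)) - 2 * (Δ : ℂ)

/-- `μ`, the unique solution of `cos μ = -Δ` in `[0, π)` when `Δ ∈ [-1, 1)`, and `0` when `Δ < -1`. -/
def muD (Δ : ℝ) : ℝ := if -1 ≤ Δ then Real.arccos (-Δ) else 0

/-- `D_Δ = (-π + μ, π - μ)`. -/
def Ddom (Δ : ℝ) : Set ℝ := Set.Ioo (-Real.pi + muD Δ) (Real.pi - muD Δ)

/-- `L(z) = 1 + c²z/(1-z)`. -/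
def Lfun (c : ℝ) (z : ℂ) : ℂ := 1 + (c : ℂ) ^ 2 * z / (1 - z)

/-- `M(z) = 1 - c²/(1-z)`. -/
def Mfun (c : ℝ) (z : ℂ) : ℂ := 1 - (c : ℂ) ^ 2 / (1 - z)

/-- `z_j = e^{i p_j}`. -/
def zOf {n : ℕ} (p : Fin n → ℝ) : Fin n → ℂ := fun j => Complex.exp (Complex.I * (p j : ℂ))

/-- The coefficient `A_σ`. -/
def Acoef {n : ℕ} (Δ : ℝ) (p : Fin n → ℝ) (σ : Equiv.Perm (Fin n)) : ℂ :=
  ((Equiv.Perm.sign σ : ℤ) : ℂ) *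
    ∏ kl ∈ Finset.univ.filter (fun kl : Fin n × Fin n => kl.1 < kl.2),
      Complex.exp (Complex.I * (p (σ kl.1) : ℂ)) * Sfun Δ (p (σ kl.1)) (p (σ kl.2))


lemma swap_adj_lt {n : ℕ} {j j' k l : Fin n} (h : (j' : ℕ) = (j : ℕ) + 1)
    (hkl : k < l) (hne : ¬(k = j ∧ l = j')) :
    Equiv.swap j j' k < Equiv.swap j j' l := by
  have hv : (k : ℕ) < (l : ℕ) := hkl
  rcases eq_or_ne k j with rfl | hkj
  · have hlj' : l ≠ j' := fun hh => hne ⟨rfl, hh⟩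
    have hlk : l ≠ k := hkl.ne'
    rw [Equiv.swap_apply_left, Equiv.swap_apply_of_ne_of_ne hlk hlj']
    have h2 : (l : ℕ) ≠ (j' : ℕ) := fun hh => hlj' (Fin.ext hh)
    rw [Fin.lt_def]; omega
  · rcases eq_or_ne k j' with rfl | hkj'
    · have hlj : l ≠ j := by
        intro hh
        have : (l : ℕ) = (j : ℕ) := congrArg Fin.val hh
        omega
      have hlj' : l ≠ k := hkl.ne'
      rw [Equiv.swap_apply_right, Equiv.swap_apply_of_ne_of_ne hlj hlj']
      rw [Fin.lt_def]; omega
    · rw [Equiv.swap_apply_of_ne_of_ne hkj hkj']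
      rcases eq_or_ne l j with rfl | hlj
      · rw [Equiv.swap_apply_left, Fin.lt_def]; omega
      · rcases eq_or_ne l j' with rfl | hlj'
        · rw [Equiv.swap_apply_right, Fin.lt_def]
          have h2 : (k : ℕ) ≠ (j : ℕ) := fun hh => hkj (Fin.ext hh)
          omega
        · rw [Equiv.swap_apply_of_ne_of_ne hlj hlj']
          exact hkl

/-- **Relation (8): behaviour of `A_σ` under an adjacent transposition.** -/
theorem Acoef_mul_adjacent_swap
    (n : ℕ)
    (c : ℝ) (hc : 0 < c) (Δ : ℝ) (hΔ : Δ = (2 - c ^ 2) / 2)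
    (Θ : ℝ → ℝ → ℝ)
    (hΘcont : ContinuousOn (fun q : ℝ × ℝ => Θ q.1 q.2) (Ddom Δ ×ˢ Ddom Δ))
    (hΘzero : Θ 0 0 = 0)
    (hΘ : ∀ a ∈ Ddom Δ, ∀ b ∈ Ddom Δ,
      Complex.exp (-(Complex.I * (Θ a b : ℂ))) =
        Complex.exp (Complex.I * ((a : ℂ) - (b : ℂ))) * Sfun Δ a b / Sfun Δ b a)
    (p : Fin n → ℝ) (hpD : ∀ j, p j ∈ Ddom Δ)
    (σ : Equiv.Perm (Fin n)) (j : Fin n) (hj : (j : ℕ) + 1 < n) :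
    Acoef Δ p (σ * Equiv.swap j ⟨(j : ℕ) + 1, hj⟩) =
      -Complex.exp (Complex.I * (Θ (p (σ j)) (p (σ ⟨(j : ℕ) + 1, hj⟩)) : ℂ)) *
        Acoef Δ p σ := by
  set j' : Fin n := ⟨(j : ℕ) + 1, hj⟩ with hj'def
  have hvj' : (j' : ℕ) = (j : ℕ) + 1 := rfl
  have hjltj' : j < j' := by rw [Fin.lt_def]; omega
  have hjne : j ≠ j' := Fin.ne_of_lt hjltj'
  set τ := Equiv.swap j j' with hτ
  set P := Finset.univ.filter (fun kl : Fin n × Fin n => kl.1 < kl.2) with hPdef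
  have hmem : ((j, j') : Fin n × Fin n) ∈ P := by
    simp [hPdef, hjltj']
  -- split the product over pairs at the pair (j, j')
  have hsplit : ∀ π : Equiv.Perm (Fin n),
      ∏ kl ∈ P,
          Complex.exp (Complex.I * (p (π kl.1) : ℂ)) * Sfun Δ (p (π kl.1)) (p (π kl.2))
        = (Complex.exp (Complex.I * (p (π j) : ℂ)) * Sfun Δ (p (π j)) (p (π j'))) *
          ∏ kl ∈ P.erase (j, j'),
            Complex.exp (Complex.I * (p (π kl.1) : ℂ)) * Sfun Δ (p (π kl.1)) (p (π kl.2)) := by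
    intro π
    exact (Finset.mul_prod_erase P _ hmem).symm
  -- the rest of the product is invariant under the adjacent swap
  have hrest :
      ∏ kl ∈ P.erase (j, j'),
          Complex.exp (Complex.I * (p ((σ * τ) kl.1) : ℂ)) *
            Sfun Δ (p ((σ * τ) kl.1)) (p ((σ * τ) kl.2))
        = ∏ kl ∈ P.erase (j, j'),
            Complex.exp (Complex.I * (p (σ kl.1) : ℂ)) * Sfun Δ (p (σ kl.1)) (p (σ kl.2)) := by
    have hmap : ∀ kl : Fin n × Fin n, kl ∈ P.erase (j, j') →
        ((τ kl.1, τ kl.2) : Fin n × Fin n) ∈ P.erase (j, j') := by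
      rintro ⟨k, l⟩ hkl
      rw [Finset.mem_erase] at hkl ⊢
      obtain ⟨hne, hP'⟩ := hkl
      have hklt : k < l := by simpa [hPdef] using hP'
      have hne' : ¬(k = j ∧ l = j') := by
        rintro ⟨rfl, rfl⟩; exact hne rfl
      have hlt : τ k < τ l := swap_adj_lt hvj' hklt hne'
      refine ⟨?_, by simpa [hPdef] using hlt⟩
      intro hh
      have h1 : τ k = j := congrArg Prod.fst hh
      have h2 : τ l = j' := congrArg Prod.snd hh
      have hk : k = j' := by
        have := congrArg τ h1
        simpa [hτ, Equiv.swap_apply_self, Equiv.swap_apply_left] using this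
      have hl : l = j := by
        have := congrArg τ h2
        simpa [hτ, Equiv.swap_apply_self, Equiv.swap_apply_right] using this
      subst hk; subst hl
      exact absurd hklt (not_lt.mpr hjltj'.le)
    refine Finset.prod_nbij' (fun kl => (τ kl.1, τ kl.2)) (fun kl => (τ kl.1, τ kl.2))
      hmap hmap ?_ ?_ ?_
    · intro kl _; simp [hτ, Equiv.swap_apply_self]
    · intro kl _; simp [hτ, Equiv.swap_apply_self]
    · intro kl _; simp [Equiv.Perm.mul_apply]
  have hστj : (σ * τ) j = σ j' := by
    simp [hτ, Equiv.Perm.mul_apply, Equiv.swap_apply_left]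
  have hστj' : (σ * τ) j' = σ j := by
    simp [hτ, Equiv.Perm.mul_apply, Equiv.swap_apply_right]
  have hsign : ((Equiv.Perm.sign (σ * τ) : ℤ) : ℂ) = -((Equiv.Perm.sign σ : ℤ) : ℂ) := by
    rw [hτ, Equiv.Perm.sign_mul, Equiv.Perm.sign_swap hjne]
    push_cast
    ring
  -- the key pointwise identity
  have hkey : Complex.exp (Complex.I * (p (σ j') : ℂ)) * Sfun Δ (p (σ j')) (p (σ j))
      = Complex.exp (Complex.I * (Θ (p (σ j)) (p (σ j')) : ℂ)) *
        (Complex.exp (Complex.I * (p (σ j) : ℂ)) * Sfun Δ (p (σ j)) (p (σ j'))) := by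
    set a := p (σ j)
    set b := p (σ j')
    have h1 := hΘ a (hpD _) b (hpD _)
    have h2 := hΘ b (hpD _) a (hpD _)
    have hSba : Sfun Δ b a ≠ 0 := by
      intro h; rw [h, div_zero] at h1; exact Complex.exp_ne_zero _ h1
    have hSab : Sfun Δ a b ≠ 0 := by
      intro h; rw [h, div_zero] at h2; exact Complex.exp_ne_zero _ h2
    rw [eq_div_iff hSba] at h1
    have e1 : Complex.exp (Complex.I * (Θ a b : ℂ)) *
        Complex.exp (-(Complex.I * (Θ a b : ℂ))) = 1 := by
      rw [← Complex.exp_add, add_neg_cancel, Complex.exp_zero]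
    have e2 : Complex.exp (Complex.I * (b : ℂ)) *
        Complex.exp (Complex.I * ((a : ℂ) - (b : ℂ))) = Complex.exp (Complex.I * (a : ℂ)) := by
      rw [← Complex.exp_add]; ring_nf
    linear_combination (Complex.exp (Complex.I * (Θ a b : ℂ)) *
        Complex.exp (Complex.I * (b : ℂ))) * h1
      - (Complex.exp (Complex.I * (b : ℂ)) * Sfun Δ b a) * e1
      + (Complex.exp (Complex.I * (Θ a b : ℂ)) * Sfun Δ a b) * e2
  -- assemble
  simp only [Acoef, ← hPdef, ← hj'def]
  rw [hsplit (σ * τ), hsplit σ, hrest, hστj, hστj', hsign, hkey]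
  ring
end
end

section
/- Let p₁,…,pₙ ∈ D_Δ satisfy the Bethe equations exp(iNp_j) = (−1)^{n−1} exp(−i Σ_{k=1}^n Θ(p_j,p_k)) for every j. Let τ ∈ S_n be the cyclic permutation with τ(i) = i+1 for 1 ≤ i < n and τ(n) = 1, and set z_j = e^{ip_j}. Then for every σ ∈ S_n, A_{σ∘τ} = z_{σ(1)}^{−N} · A_σ. -/
open scoped BigOperators
open Complex

noncomputable section

set_option maxHeartbeats 1000000 in
/-- **Relation (11): behaviour of `A_σ` under the cyclic permutation `τ`.** -/
theorem Acoef_mul_cycle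
    (N n : ℕ) (hN : 0 < N) (hn : 0 < n)
    (c : ℝ) (hc : 0 < c) (Δ : ℝ) (hΔ : Δ = (2 - c ^ 2) / 2)
    (Θ : ℝ → ℝ → ℝ)
    (hΘcont : ContinuousOn (fun q : ℝ × ℝ => Θ q.1 q.2) (Ddom Δ ×ˢ Ddom Δ))
    (hΘzero : Θ 0 0 = 0)
    (hΘ : ∀ a ∈ Ddom Δ, ∀ b ∈ Ddom Δ,
      Complex.exp (-(Complex.I * (Θ a b : ℂ))) =
        Complex.exp (Complex.I * ((a : ℂ) - (b : ℂ))) * Sfun Δ a b / Sfun Δ b a)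
    (hΘanti : ∀ a ∈ Ddom Δ, ∀ b ∈ Ddom Δ, Θ b a = -Θ a b)
    (p : Fin n → ℝ) (hpD : ∀ j, p j ∈ Ddom Δ)
    (hBE : ∀ j, Complex.exp (Complex.I * (N : ℂ) * (p j : ℂ)) =
      (-1 : ℂ) ^ (n - 1) *
        Complex.exp (-(Complex.I * ((∑ k, Θ (p j) (p k) : ℝ) : ℂ))))
    (σ : Equiv.Perm (Fin n)) :
    Acoef Δ p (σ * finRotate n) = zOf p (σ ⟨0, hn⟩) ^ (-(N : ℤ)) * Acoef Δ p σ := by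
  obtain ⟨m, rfl⟩ : ∃ m, n = m + 1 := ⟨n - 1, by omega⟩
  have h0 : (⟨0, hn⟩ : Fin (m + 1)) = 0 := rfl
  rw [h0]
  -- nonvanishing of S on D × D
  have hSne : ∀ a ∈ Ddom Δ, ∀ b ∈ Ddom Δ, Sfun Δ a b ≠ 0 := by
    intro a ha b hb h
    have h2 := hΘ b hb a ha
    rw [h, div_zero] at h2
    exact Complex.exp_ne_zero _ h2
  set F : Fin (m + 1) → Fin (m + 1) → ℂ :=
    fun i j => Complex.exp (Complex.I * (p i : ℂ)) * Sfun Δ (p i) (p j) with hF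
  have key : ∀ i j : Fin (m + 1),
      F j i = Complex.exp (Complex.I * (Θ (p i) (p j) : ℂ)) * F i j := by
    intro i j
    have h := hΘ (p i) (hpD i) (p j) (hpD j)
    have h2 : Sfun Δ (p j) (p i) ≠ 0 := hSne _ (hpD j) _ (hpD i)
    rw [eq_div_iff h2] at h
    have h4 : Complex.exp (Complex.I * (p j : ℂ)) *
        Complex.exp (Complex.I * ((p i : ℂ) - (p j : ℂ))) =
        Complex.exp (Complex.I * (p i : ℂ)) := by
      rw [← Complex.exp_add]; congr 1; ring
    have h3 : Sfun Δ (p j) (p i) =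
        Complex.exp (Complex.I * (Θ (p i) (p j) : ℂ)) *
          (Complex.exp (Complex.I * ((p i : ℂ) - (p j : ℂ))) * Sfun Δ (p i) (p j)) := by
      calc Sfun Δ (p j) (p i)
          = (Complex.exp (Complex.I * (Θ (p i) (p j) : ℂ)) *
              Complex.exp (-(Complex.I * (Θ (p i) (p j) : ℂ)))) * Sfun Δ (p j) (p i) := by
            rw [← Complex.exp_add]; simp
        _ = Complex.exp (Complex.I * (Θ (p i) (p j) : ℂ)) *
              (Complex.exp (-(Complex.I * (Θ (p i) (p j) : ℂ))) * Sfun Δ (p j) (p i)) := by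
            ring
        _ = _ := by rw [h]
    simp only [hF]
    rw [h3, ← h4]; ring
  set T : Finset (Fin (m + 1) × Fin (m + 1)) :=
    Finset.univ.filter (fun kl : Fin (m + 1) × Fin (m + 1) => kl.1 < kl.2) with hT
  set T' : Finset (Fin (m + 1) × Fin (m + 1)) :=
    Finset.univ.filter
      (fun kl : Fin (m + 1) × Fin (m + 1) => kl.1 ≠ 0 ∧ (kl.2 = 0 ∨ kl.1 < kl.2)) with hT'
  set τ : Equiv.Perm (Fin (m + 1)) := finRotate (m + 1) with hτ
  have hτapp : ∀ i : Fin (m + 1), τ i = i + 1 := fun i => finRotate_succ_apply i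
  -- Step A: reindexing by τ
  have hbij : ∏ kl ∈ T, F (σ (τ kl.1)) (σ (τ kl.2)) = ∏ kl ∈ T', F (σ kl.1) (σ kl.2) := by
    apply Finset.prod_nbij' (i := fun kl => (τ kl.1, τ kl.2))
      (j := fun kl => (kl.1 - 1, kl.2 - 1))
    · intro kl hkl
      simp only [hT, hT', Finset.mem_filter, Finset.mem_univ, true_and] at hkl ⊢
      have h1 : kl.1 < Fin.last m := lt_of_lt_of_le hkl (Fin.le_last _)
      have hv1 := Fin.val_add_one_of_lt h1
      rw [hτapp, hτapp]
      constructor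
      · intro h
        have := congrArg Fin.val h
        rw [hv1] at this
        simp at this
      · by_cases h2 : kl.2 = Fin.last m
        · left; rw [h2, Fin.last_add_one]
        · right
          have h2' : kl.2 < Fin.last m := lt_of_le_of_ne (Fin.le_last _) h2
          have hv2 := Fin.val_add_one_of_lt h2'
          rw [Fin.lt_def, hv1, hv2]
          exact Nat.succ_lt_succ hkl
    · intro kl hkl
      simp only [hT, hT', Finset.mem_filter, Finset.mem_univ, true_and] at hkl ⊢
      obtain ⟨h1, h2⟩ := hkl
      have hv1 : kl.1.val ≠ 0 := fun h => h1 (Fin.ext h)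
      rw [Fin.lt_def, Fin.coe_sub_one, Fin.coe_sub_one, if_neg h1]
      rcases h2 with h2 | h2
      · rw [if_pos h2]
        have := kl.1.isLt
        omega
      · have h2' : kl.2 ≠ 0 := by
          intro h; rw [h] at h2; exact absurd h2 (Fin.not_lt_zero _)
        rw [if_neg h2']
        have := Fin.lt_def.mp h2
        have hv2 : kl.2.val ≠ 0 := fun h => h2' (Fin.ext h)
        omega
    · intro kl _
      rw [hτapp, hτapp]
      exact Prod.ext (add_sub_cancel_right _ _) (add_sub_cancel_right _ _)
    · intro kl _
      rw [hτapp, hτapp]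
      exact Prod.ext (sub_add_cancel _ _) (sub_add_cancel _ _)
    · intro kl _
      rfl
  -- the common middle set
  set C : Finset (Fin (m + 1) × Fin (m + 1)) :=
    Finset.univ.filter
      (fun kl : Fin (m + 1) × Fin (m + 1) => kl.1 ≠ 0 ∧ kl.1 < kl.2) with hC
  set K : Finset (Fin (m + 1)) := Finset.univ.filter (fun k : Fin (m + 1) => k ≠ 0) with hK
  -- split of T
  have hsplit1 : ∏ kl ∈ T, F (σ kl.1) (σ kl.2)
      = (∏ l ∈ K, F (σ 0) (σ l)) * ∏ kl ∈ C, F (σ kl.1) (σ kl.2) := by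
    rw [← Finset.prod_filter_mul_prod_filter_not T (fun kl => kl.1 = 0)
      (fun kl => F (σ kl.1) (σ kl.2))]
    congr 1
    · apply Finset.prod_nbij' (i := fun kl : Fin (m + 1) × Fin (m + 1) => kl.2)
        (j := fun l : Fin (m + 1) => ((0 : Fin (m + 1)), l))
      · intro kl hkl
        simp only [hT, hK, Finset.mem_filter, Finset.mem_univ, true_and,
          Finset.filter_filter] at hkl ⊢
        obtain ⟨h1, h2⟩ := hkl
        rw [h2] at h1
        exact Fin.pos_iff_ne_zero.mp h1
      · intro l hl
        simp only [hT, hK, Finset.mem_filter, Finset.mem_univ, true_and,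
          Finset.filter_filter] at hl ⊢
        exact ⟨Fin.pos_iff_ne_zero.mpr hl, trivial⟩
      · intro kl hkl
        simp only [hT, Finset.mem_filter, Finset.mem_univ, true_and,
          Finset.filter_filter] at hkl
        exact (Prod.ext hkl.2.symm rfl)
      · intro l _; rfl
      · intro kl hkl
        simp only [hT, Finset.mem_filter, Finset.mem_univ, true_and,
          Finset.filter_filter] at hkl
        rw [hkl.2]
    · rw [hT, Finset.filter_filter, hC]
      apply Finset.prod_congr
      · apply Finset.filter_congr
        intro kl _
        tauto
      · intro _ _; rfl
  -- split of T'
  have hsplit2 : ∏ kl ∈ T', F (σ kl.1) (σ kl.2)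
      = (∏ k ∈ K, F (σ k) (σ 0)) * ∏ kl ∈ C, F (σ kl.1) (σ kl.2) := by
    rw [← Finset.prod_filter_mul_prod_filter_not T' (fun kl => kl.2 = 0)
      (fun kl => F (σ kl.1) (σ kl.2))]
    congr 1
    · apply Finset.prod_nbij' (i := fun kl : Fin (m + 1) × Fin (m + 1) => kl.1)
        (j := fun k : Fin (m + 1) => (k, (0 : Fin (m + 1))))
      · intro kl hkl
        simp only [hT', hK, Finset.mem_filter, Finset.mem_univ, true_and,
          Finset.filter_filter] at hkl ⊢
        exact hkl.1.1
      · intro k hk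
        simp only [hT', hK, Finset.mem_filter, Finset.mem_univ, true_and,
          Finset.filter_filter] at hk ⊢
        exact ⟨⟨hk, Or.inl trivial⟩, trivial⟩
      · intro kl hkl
        simp only [hT', Finset.mem_filter, Finset.mem_univ, true_and,
          Finset.filter_filter] at hkl
        exact (Prod.ext rfl hkl.2.symm)
      · intro k _; rfl
      · intro kl hkl
        simp only [hT', Finset.mem_filter, Finset.mem_univ, true_and,
          Finset.filter_filter] at hkl
        rw [hkl.2]
    · rw [hT', Finset.filter_filter, hC]
      apply Finset.prod_congr
      · apply Finset.filter_congr
        intro kl _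
        constructor
        · rintro ⟨⟨ha, hb | hb⟩, hc⟩
          · exact absurd hb hc
          · exact ⟨ha, hb⟩
        · rintro ⟨ha, hb⟩
          refine ⟨⟨ha, Or.inr hb⟩, ?_⟩
          intro h
          rw [h] at hb
          exact Fin.not_lt_zero _ hb
      · intro _ _; rfl
  -- Θ(a,a) = 0
  have hΘself : Θ (p (σ 0)) (p (σ 0)) = 0 := by
    have := hΘanti (p (σ 0)) (hpD _) (p (σ 0)) (hpD _)
    linarith
  -- product of phase factors
  have hphase : ∏ k ∈ K, F (σ k) (σ 0)
      = Complex.exp (Complex.I * ((∑ k, Θ (p (σ 0)) (p k) : ℝ) : ℂ)) *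
          ∏ k ∈ K, F (σ 0) (σ k) := by
    have h1 : ∏ k ∈ K, F (σ k) (σ 0)
        = ∏ k ∈ K, (Complex.exp (Complex.I * (Θ (p (σ 0)) (p (σ k)) : ℂ)) * F (σ 0) (σ k)) :=
      Finset.prod_congr rfl (fun k _ => key (σ 0) (σ k))
    rw [h1, Finset.prod_mul_distrib]
    congr 1
    have h2 : ∏ k ∈ K, Complex.exp (Complex.I * (Θ (p (σ 0)) (p (σ k)) : ℂ))
        = ∏ k : Fin (m + 1), Complex.exp (Complex.I * (Θ (p (σ 0)) (p (σ k)) : ℂ)) := by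
      apply Finset.prod_subset (Finset.filter_subset _ _)
      intro k _ hk
      simp only [hK, Finset.mem_filter, Finset.mem_univ, true_and, not_not] at hk
      rw [hk]
      rw [hΘself]
      simp
    rw [h2, ← Complex.exp_sum, ← Finset.mul_sum]
    congr 1
    have h3 : ∑ k : Fin (m + 1), ((Θ (p (σ 0)) (p (σ k)) : ℝ) : ℂ)
        = ∑ k : Fin (m + 1), ((Θ (p (σ 0)) (p k) : ℝ) : ℂ) :=
      Equiv.sum_comp σ (fun k => ((Θ (p (σ 0)) (p k) : ℝ) : ℂ))
    rw [h3]
    push_cast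
    ring
  -- Bethe equation consequence
  have hz : zOf p (σ 0) ^ (-(N : ℤ))
      = (-1 : ℂ) ^ m * Complex.exp (Complex.I * ((∑ k, Θ (p (σ 0)) (p k) : ℝ) : ℂ)) := by
    have hb := hBE (σ 0)
    simp only [Nat.add_sub_cancel] at hb
    calc zOf p (σ 0) ^ (-(N : ℤ))
        = Complex.exp (((-(N : ℤ) : ℤ) : ℂ) * (Complex.I * (p (σ 0) : ℂ))) :=
          (Complex.exp_int_mul _ _).symm
      _ = Complex.exp (-(Complex.I * (N : ℂ) * (p (σ 0) : ℂ))) := by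
          congr 1; push_cast; ring
      _ = (Complex.exp (Complex.I * (N : ℂ) * (p (σ 0) : ℂ)))⁻¹ := Complex.exp_neg _
      _ = ((-1 : ℂ) ^ m *
            Complex.exp (-(Complex.I * ((∑ k, Θ (p (σ 0)) (p k) : ℝ) : ℂ))))⁻¹ := by rw [hb]
      _ = (-1 : ℂ) ^ m * Complex.exp (Complex.I * ((∑ k, Θ (p (σ 0)) (p k) : ℝ) : ℂ)) := by
          rw [mul_inv, ← inv_pow, inv_neg, inv_one, Complex.exp_neg, inv_inv]
  -- sign computation
  have hsign : ((Equiv.Perm.sign (σ * τ) : ℤ) : ℂ)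
      = ((Equiv.Perm.sign σ : ℤ) : ℂ) * (-1 : ℂ) ^ m := by
    rw [map_mul, hτ, sign_finRotate]
    push_cast
    ring
  -- assemble
  show ((Equiv.Perm.sign (σ * τ) : ℤ) : ℂ) *
      ∏ kl ∈ T, F ((σ * τ) kl.1) ((σ * τ) kl.2)
    = zOf p (σ 0) ^ (-(N : ℤ)) *
      (((Equiv.Perm.sign σ : ℤ) : ℂ) * ∏ kl ∈ T, F (σ kl.1) (σ kl.2))
  simp only [Equiv.Perm.mul_apply]
  rw [hbij, hsplit2, hsplit1, hphase, hz, hsign]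
  ring
end
end

section
/- Let p_j, p_k ∈ D_Δ be nonzero, and set z_j = e^{ip_j}, z_k = e^{ip_k}. Then exp(i Θ(p_j, p_k)) = (M(z_j)L(z_k) − 1)/(M(z_k)L(z_j) − 1), where L(z) = 1 + c²z/(1−z) and M(z) = 1 − c²/(1−z). -/
open scoped BigOperators
open Complex

noncomputable section

/-- **Relation (6): `exp(iΘ)` in terms of the functions `L` and `M`.** -/
theorem exp_Theta_eq_LM
    (c : ℝ) (hc : 0 < c) (Δ : ℝ) (hΔ : Δ = (2 - c ^ 2) / 2)
    (Θ : ℝ → ℝ → ℝ)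
    (hΘcont : ContinuousOn (fun q : ℝ × ℝ => Θ q.1 q.2) (Ddom Δ ×ˢ Ddom Δ))
    (hΘzero : Θ 0 0 = 0)
    (hΘ : ∀ a ∈ Ddom Δ, ∀ b ∈ Ddom Δ,
      Complex.exp (-(Complex.I * (Θ a b : ℂ))) =
        Complex.exp (Complex.I * ((a : ℂ) - (b : ℂ))) * Sfun Δ a b / Sfun Δ b a)
    (pj pk : ℝ) (hpj : pj ∈ Ddom Δ) (hpk : pk ∈ Ddom Δ)
    (hpj0 : pj ≠ 0) (hpk0 : pk ≠ 0) :
    Complex.exp (Complex.I * (Θ pj pk : ℂ)) =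
      (Mfun c (Complex.exp (Complex.I * (pj : ℂ))) *
          Lfun c (Complex.exp (Complex.I * (pk : ℂ))) - 1) /
        (Mfun c (Complex.exp (Complex.I * (pk : ℂ))) *
          Lfun c (Complex.exp (Complex.I * (pj : ℂ))) - 1) := by
  -- basic facts
  have hμ : 0 ≤ muD Δ := by
    unfold muD; split_ifs; exacts [Real.arccos_nonneg _, le_rfl]
  have hne1 : ∀ p : ℝ, p ∈ Ddom Δ → p ≠ 0 → Complex.exp (Complex.I * (p : ℂ)) ≠ 1 := by
    intro p hp hp0 h
    rw [Complex.exp_eq_one_iff] at h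
    obtain ⟨n, hn⟩ := h
    have hpc : (p : ℂ) = (n : ℂ) * (2 * Real.pi) := by
      apply mul_left_cancel₀ Complex.I_ne_zero
      rw [hn]; ring
    have hpr : p = (n : ℝ) * (2 * Real.pi) := by exact_mod_cast hpc
    have hπ : 0 < Real.pi := Real.pi_pos
    obtain ⟨hp1, hp2⟩ := hp
    rcases eq_or_ne n 0 with h0 | h0
    · exact hp0 (by simp [h0] at hpr; exact hpr)
    · have hn1 : (1 : ℝ) ≤ |(n : ℝ)| := by
        exact_mod_cast Int.one_le_abs (by exact_mod_cast h0 : n ≠ 0)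
      have habs : |p| < Real.pi := abs_lt.2 ⟨by linarith, by linarith⟩
      have : 2 * Real.pi ≤ |p| := by
        rw [hpr, abs_mul, abs_of_pos (by linarith : (0:ℝ) < 2 * Real.pi)]
        nlinarith
      linarith
  set u := Complex.exp (Complex.I * (pj : ℂ)) with hu
  set v := Complex.exp (Complex.I * (pk : ℂ)) with hv
  have hu0 : u ≠ 0 := Complex.exp_ne_zero _
  have hv0 : v ≠ 0 := Complex.exp_ne_zero _
  have hu1 : (1 : ℂ) - u ≠ 0 := fun h => hne1 pj hpj hpj0 (by linear_combination -h)
  have hv1 : (1 : ℂ) - v ≠ 0 := fun h => hne1 pk hpk hpk0 (by linear_combination -h)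
  -- Sfun expressions
  have hSjk : Sfun Δ pj pk = u⁻¹ + v - 2 * (Δ : ℂ) := by
    rw [Sfun, ← Complex.exp_neg]
  have hSkj : Sfun Δ pk pj = v⁻¹ + u - 2 * (Δ : ℂ) := by
    rw [Sfun, ← Complex.exp_neg]
  have hmain := hΘ pj hpj pk hpk
  have hSjk0 : Sfun Δ pj pk ≠ 0 := by
    intro h
    apply Complex.exp_ne_zero (-(Complex.I * ((Θ pj pk : ℝ) : ℂ)))
    rw [hmain, h, mul_zero, zero_div]
  have hSkj0 : Sfun Δ pk pj ≠ 0 := by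
    intro h
    apply Complex.exp_ne_zero (-(Complex.I * ((Θ pj pk : ℝ) : ℂ)))
    rw [hmain, h, div_zero]
  -- exp(iΘ) = inverse of exp(-iΘ)
  have hinv : Complex.exp (Complex.I * ((Θ pj pk : ℝ) : ℂ)) =
      Sfun Δ pk pj / (Complex.exp (Complex.I * ((pj : ℂ) - (pk : ℂ))) * Sfun Δ pj pk) := by
    have h1 : Complex.exp (Complex.I * ((Θ pj pk : ℝ) : ℂ)) *
        Complex.exp (-(Complex.I * ((Θ pj pk : ℝ) : ℂ))) = 1 := by
      rw [← Complex.exp_add]; simp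
    rw [hmain] at h1
    have he0 : Complex.exp (Complex.I * ((pj : ℂ) - (pk : ℂ))) ≠ 0 := Complex.exp_ne_zero _
    field_simp at h1 ⊢
    linear_combination h1
  have hed : Complex.exp (Complex.I * ((pj : ℂ) - (pk : ℂ))) = u * v⁻¹ := by
    rw [hu, hv, ← Complex.exp_neg, ← Complex.exp_add]; ring_nf
  have hΔ2 : (2 : ℂ) * (Δ : ℂ) = 2 - (c : ℂ) ^ 2 := by
    rw [hΔ]; push_cast; ring
  have hc0 : (c : ℂ) ≠ 0 := by exact_mod_cast hc.ne'
  -- factorizations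
  have e1 : Mfun c u * Lfun c v - 1 =
      -(c : ℂ) ^ 2 * v * Sfun Δ pk pj / ((1 - u) * (1 - v)) := by
    rw [Mfun, Lfun, hSkj, show (2:ℂ) * (Δ : ℂ) = 2 - (c:ℂ)^2 from hΔ2]
    field_simp
    ring
  have e2 : Mfun c v * Lfun c u - 1 =
      -(c : ℂ) ^ 2 * u * Sfun Δ pj pk / ((1 - v) * (1 - u)) := by
    rw [Mfun, Lfun, hSjk, show (2:ℂ) * (Δ : ℂ) = 2 - (c:ℂ)^2 from hΔ2]
    field_simp
    ring
  have hc2 : -(c:ℂ)^2 ≠ 0 := by simpa using pow_ne_zero 2 hc0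
  have hA : u * v⁻¹ * Sfun Δ pj pk ≠ 0 :=
    mul_ne_zero (mul_ne_zero hu0 (inv_ne_zero hv0)) hSjk0
  have hB : -(c:ℂ)^2 * u * Sfun Δ pj pk / ((1 - v) * (1 - u)) ≠ 0 :=
    div_ne_zero (mul_ne_zero (mul_ne_zero hc2 hu0) hSjk0) (mul_ne_zero hv1 hu1)
  rw [hinv, hed, e1, e2, div_eq_div_iff hA hB]
  field_simp
end
end

section
/- (Change of variables formula.) Assume p₁,…,pₙ ∈ D_Δ satisfy the Bethe equations exp(iNp_j) = (−1)^{n−1} exp(−i Σ_{k=1}^n Θ(p_j,p_k)) for every j. Fix integers 1 ≤ x₁ < … < xₙ ≤ N and set x₀ = xₙ − N. Then for any function f : S_n → ℝ, Σ_{σ∈S_n} A_σ f(σ) Π_{k=1}^n z_{σ(k)}^{x_k} = Σ_{σ∈S_n} A_σ f(σ∘τ) Π_{k=1}^n z_{σ(k)}^{x_{k−1}}, where τ is the cyclic permutation τ(i) = i+1 for i < n, τ(n) = 1, and z_j = e^{ip_j}. -/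
open scoped BigOperators
open Complex

noncomputable section

/-! Substitute `σ = ρ τ⁻¹` in the right-hand side. Since `x₀ = xₙ - N`, the claim then reduces
termwise to `A_{ρτ⁻¹} = z_{ρ(n)}^N A_ρ`. Rotating the positions by `τ⁻¹` moves `ρ(n)` from the
last place to the first: the sign changes by `(-1)^{n-1}` and each factor
`e^{ip_{ρ k}} S(p_{ρ k}, p_{ρ n})` becomes `e^{ip_{ρ n}} S(p_{ρ n}, p_{ρ k})`, which is
`e^{-iΘ(p_{ρ n}, p_{ρ k})}` times the old factor. The Bethe equation for `p_{ρ(n)}` says that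
these phases multiply to `(-1)^{n-1} z_{ρ(n)}^N`. -/

open Finset

section

variable {m : ℕ}

lemma finRotate_succ_castSucc (i : Fin m) :
    finRotate (m + 1) i.castSucc = i.succ := by
  ext; simp

lemma finRotate_succ_inv_zero : (finRotate (m + 1))⁻¹ 0 = Fin.last m := by
  rw [Equiv.Perm.inv_eq_iff_eq, finRotate_last]

lemma finRotate_succ_inv_succ (i : Fin m) :
    (finRotate (m + 1))⁻¹ i.succ = i.castSucc := by
  rw [Equiv.Perm.inv_eq_iff_eq, finRotate_succ_castSucc]

section PairProducts

variable {M : Type*} [CommMonoid M]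

lemma prod_pairs_lt_eq_prod_castSucc (G : Fin (m + 1) → Fin (m + 1) → M) :
    ∏ kl ∈ univ.filter (fun kl : Fin (m + 1) × Fin (m + 1) => kl.1 < kl.2), G kl.1 kl.2 =
      (∏ i : Fin m, G i.castSucc (Fin.last m)) *
        ∏ ij ∈ univ.filter (fun ij : Fin m × Fin m => ij.1 < ij.2),
          G ij.1.castSucc ij.2.castSucc := by
  simp [prod_filter, Fintype.prod_prod_type, Fin.prod_univ_castSucc, prod_mul_distrib,
    (Fin.castSucc_lt_last _).not_gt, mul_comm]

lemma prod_pairs_lt_finRotate_inv (G : Fin (m + 1) → Fin (m + 1) → M) :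
    ∏ kl ∈ univ.filter (fun kl : Fin (m + 1) × Fin (m + 1) => kl.1 < kl.2),
        G ((finRotate (m + 1))⁻¹ kl.1) ((finRotate (m + 1))⁻¹ kl.2) =
      (∏ i : Fin m, G (Fin.last m) i.castSucc) *
        ∏ ij ∈ univ.filter (fun ij : Fin m × Fin m => ij.1 < ij.2),
          G ij.1.castSucc ij.2.castSucc := by
  simp only [prod_filter, Fintype.prod_prod_type, Fin.prod_univ_succ, finRotate_succ_inv_zero,
    finRotate_succ_inv_succ]
  simp [Fin.succ_pos]

lemma prod_pairs_lt_finRotate_inv_eq_mul (G : Fin (m + 1) → Fin (m + 1) → M) (E : Fin m → M)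
    (hG : ∀ i, G (Fin.last m) i.castSucc = E i * G i.castSucc (Fin.last m)) :
    ∏ kl ∈ univ.filter (fun kl : Fin (m + 1) × Fin (m + 1) => kl.1 < kl.2),
        G ((finRotate (m + 1))⁻¹ kl.1) ((finRotate (m + 1))⁻¹ kl.2) =
      (∏ i, E i) * ∏ kl ∈ univ.filter (fun kl : Fin (m + 1) × Fin (m + 1) => kl.1 < kl.2),
        G kl.1 kl.2 := by
  rw [prod_pairs_lt_finRotate_inv, prod_pairs_lt_eq_prod_castSucc, Fintype.prod_congr _ _ hG,
    prod_mul_distrib, mul_assoc]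

end PairProducts

section Scattering

variable {Δ a b θ : ℝ}

lemma Sfun_ne_zero_of_exp_eq (h : exp (-(I * θ)) = exp (I * (a - b)) * Sfun Δ a b / Sfun Δ b a) :
    Sfun Δ b a ≠ 0 := by
  rintro h0
  rw [h0, div_zero] at h
  exact exp_ne_zero _ h

lemma exp_mul_Sfun_eq_of_exp_eq
    (h : exp (-(I * θ)) = exp (I * (a - b)) * Sfun Δ a b / Sfun Δ b a) :
    exp (I * a) * Sfun Δ a b = exp (-(I * θ)) * (exp (I * b) * Sfun Δ b a) := by
  have hS := Sfun_ne_zero_of_exp_eq h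
  have hexp : exp (I * a) = exp (I * (a - b)) * exp (I * b) := by rw [← exp_add]; ring_nf
  rw [h, hexp]
  field_simp

lemma exp_neg_I_mul_eq_one_of_exp_eq
    (h : exp (-(I * θ)) = exp (I * (a - a)) * Sfun Δ a a / Sfun Δ a a) :
    exp (-(I * θ)) = 1 := by
  rw [h, sub_self, mul_zero, exp_zero, one_mul, div_self (Sfun_ne_zero_of_exp_eq h)]

end Scattering

lemma prod_exp_neg_I_mul_castSucc_eq_of_bethe {Θ : ℝ → ℝ → ℝ} (N : ℕ) (p : Fin (m + 1) → ℝ)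
    (ρ : Equiv.Perm (Fin (m + 1)))
    (hdiag : exp (-(I * Θ (p (ρ (Fin.last m))) (p (ρ (Fin.last m))))) = 1)
    (hBE : exp (I * N * p (ρ (Fin.last m))) =
      (-1) ^ m * exp (-(I * ((∑ k, Θ (p (ρ (Fin.last m))) (p k) : ℝ) : ℂ)))) :
    ∏ i : Fin m, exp (-(I * Θ (p (ρ (Fin.last m))) (p (ρ i.castSucc)))) =
      (-1) ^ m * zOf p (ρ (Fin.last m)) ^ N := by
  have hsq : ((-1 : ℂ) ^ m) * (-1) ^ m = 1 := by simp [← mul_pow]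
  have hall : ∏ k, exp (-(I * Θ (p (ρ (Fin.last m))) (p (ρ k)))) =
      (-1) ^ m * zOf p (ρ (Fin.last m)) ^ N := by
    rw [Equiv.prod_comp ρ (fun k => exp (-(I * Θ (p (ρ (Fin.last m))) (p k)))), ← exp_sum, zOf,
      ← exp_nat_mul, show (N : ℂ) * (I * p (ρ (Fin.last m))) = I * N * p (ρ (Fin.last m)) by ring,
      hBE, ← mul_assoc, hsq, one_mul]
    push_cast
    simp [mul_sum]
  rwa [Fin.prod_univ_castSucc, hdiag, mul_one] at hall

lemma Acoef_mul_finRotate_inv {Δ : ℝ} {Θ : ℝ → ℝ → ℝ} (N : ℕ)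
    (hΘ : ∀ a ∈ Ddom Δ, ∀ b ∈ Ddom Δ,
      exp (-(I * Θ a b)) = exp (I * (a - b)) * Sfun Δ a b / Sfun Δ b a)
    (p : Fin (m + 1) → ℝ) (hpD : ∀ j, p j ∈ Ddom Δ)
    (hBE : ∀ j, exp (I * N * p j) = (-1) ^ m * exp (-(I * ((∑ k, Θ (p j) (p k) : ℝ) : ℂ))))
    (ρ : Equiv.Perm (Fin (m + 1))) :
    Acoef Δ p (ρ * (finRotate (m + 1))⁻¹) = zOf p (ρ (Fin.last m)) ^ N * Acoef Δ p ρ := by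
  have hsign : (-1) ^ m * ((Equiv.Perm.sign (ρ * (finRotate (m + 1))⁻¹) : ℤ) : ℂ) =
      ((Equiv.Perm.sign ρ : ℤ) : ℂ) := by
    simp [sign_finRotate, mul_left_comm _ (Equiv.Perm.sign ρ : ℂ), ← mul_pow]
  have hpairs := prod_pairs_lt_finRotate_inv_eq_mul
    (fun i j => exp (I * p (ρ i)) * Sfun Δ (p (ρ i)) (p (ρ j)))
    (fun i => exp (-(I * Θ (p (ρ (Fin.last m))) (p (ρ i.castSucc)))))
    (fun i => exp_mul_Sfun_eq_of_exp_eq (hΘ _ (hpD _) _ (hpD _)))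
  rw [prod_exp_neg_I_mul_castSucc_eq_of_bethe N p ρ
    (exp_neg_I_mul_eq_one_of_exp_eq (hΘ _ (hpD _) _ (hpD _))) (hBE _)] at hpairs
  simp only [Acoef, Equiv.Perm.mul_apply, hpairs]
  rw [← hsign]
  ring

lemma pow_mul_prod_zpow_finRotate_inv {G₀ : Type*} [CommGroupWithZero G₀] (w : Fin (m + 1) → G₀)
    (x : ℕ → ℤ) (N : ℕ) (hx0 : x 0 = x (m + 1) - N) (hw : w (Fin.last m) ≠ 0) :
    w (Fin.last m) ^ N * ∏ k, w ((finRotate (m + 1))⁻¹ k) ^ x k =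
      ∏ k : Fin (m + 1), w k ^ x (k + 1) := by
  rw [Fin.prod_univ_succ, Fin.prod_univ_castSucc]
  simp only [finRotate_succ_inv_zero, finRotate_succ_inv_succ, Fin.val_succ, Fin.val_castSucc,
    Fin.val_last, Fin.val_zero, hx0, zpow_sub₀ hw, zpow_natCast]
  field_simp

end

theorem change_of_variables_general
    (N n : ℕ) (Δ : ℝ)
    (Θ : ℝ → ℝ → ℝ)
    (hΘ : ∀ a ∈ Ddom Δ, ∀ b ∈ Ddom Δ,
      Complex.exp (-(Complex.I * (Θ a b : ℂ))) =
        Complex.exp (Complex.I * ((a : ℂ) - (b : ℂ))) * Sfun Δ a b / Sfun Δ b a)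
    (p : Fin n → ℝ) (hpD : ∀ j, p j ∈ Ddom Δ)
    (hBE : ∀ j, Complex.exp (Complex.I * (N : ℂ) * (p j : ℂ)) =
      (-1 : ℂ) ^ (n - 1) *
        Complex.exp (-(Complex.I * ((∑ k, Θ (p j) (p k) : ℝ) : ℂ))))
    (x : ℕ → ℤ) (hx0 : x 0 = x n - N)
    (f : Equiv.Perm (Fin n) → ℝ) :
    ∑ σ : Equiv.Perm (Fin n),
        Acoef Δ p σ * (f σ : ℂ) * ∏ k : Fin n, zOf p (σ k) ^ (x ((k : ℕ) + 1)) =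
      ∑ σ : Equiv.Perm (Fin n),
        Acoef Δ p σ * (f (σ * finRotate n) : ℂ) *
          ∏ k : Fin n, zOf p (σ k) ^ (x (k : ℕ)) := by
  cases n with
  | zero => simp [Subsingleton.elim (finRotate 0) 1]
  | succ m =>
    conv_rhs => rw [← Equiv.sum_comp (Equiv.mulRight (finRotate (m + 1))⁻¹)]
    refine sum_congr rfl fun ρ _ => ?_
    simp only [Equiv.coe_mulRight, inv_mul_cancel_right, Equiv.Perm.mul_apply,
      Acoef_mul_finRotate_inv N hΘ p hpD (by simpa using hBE) ρ]
    have hmonomial := pow_mul_prod_zpow_finRotate_inv (zOf p ∘ ρ) x N hx0 (exp_ne_zero _)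
    simp only [Function.comp_apply] at hmonomial
    rw [← hmonomial]
    ring

/-- **Change of variables formula (Proposition 3.3).** -/
theorem change_of_variables
    (N n : ℕ) (hN : 0 < N)
    (c : ℝ) (hc : 0 < c) (Δ : ℝ) (hΔ : Δ = (2 - c ^ 2) / 2)
    (Θ : ℝ → ℝ → ℝ)
    (hΘcont : ContinuousOn (fun q : ℝ × ℝ => Θ q.1 q.2) (Ddom Δ ×ˢ Ddom Δ))
    (hΘzero : Θ 0 0 = 0)
    (hΘ : ∀ a ∈ Ddom Δ, ∀ b ∈ Ddom Δ,
      Complex.exp (-(Complex.I * (Θ a b : ℂ))) =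
        Complex.exp (Complex.I * ((a : ℂ) - (b : ℂ))) * Sfun Δ a b / Sfun Δ b a)
    (p : Fin n → ℝ) (hpD : ∀ j, p j ∈ Ddom Δ)
    (hBE : ∀ j, Complex.exp (Complex.I * (N : ℂ) * (p j : ℂ)) =
      (-1 : ℂ) ^ (n - 1) *
        Complex.exp (-(Complex.I * ((∑ k, Θ (p j) (p k) : ℝ) : ℂ))))
    (x : ℕ → ℤ) (hx0 : x 0 = x n - N)
    (hxmono : ∀ i j, i < j → j ≤ n → x i < x j)
    (hx1 : 1 ≤ x 1) (hxN : x n ≤ (N : ℤ))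
    (f : Equiv.Perm (Fin n) → ℝ) :
    ∑ σ : Equiv.Perm (Fin n),
        Acoef Δ p σ * (f σ : ℂ) * ∏ k : Fin n, zOf p (σ k) ^ (x ((k : ℕ) + 1)) =
      ∑ σ : Equiv.Perm (Fin n),
        Acoef Δ p σ * (f (σ * finRotate n) : ℂ) *
          ∏ k : Fin n, zOf p (σ k) ^ (x (k : ℕ)) :=
  change_of_variables_general N n Δ Θ hΘ p hpD hBE x hx0 f
end
end

section
/- Fix 1 ≤ x₁ < … < xₙ ≤ N and set x₀ = xₙ − N. For any σ ∈ S_n and any p₁,…,pₙ ∈ D_Δ that are distinct and all nonzero, R_σ = Σ_{w∈𝒲} r_σ(w) Z_σ(w), where 𝒲 = {L,M}^n is the set of words of length n, and R_σ, r_σ(w), Z_σ(w) are defined in the context. (The Bethe equations are not assumed.) -/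
open scoped BigOperators
open Complex

noncomputable section

/-- `Z_σ(w)`; the letter `L` is encoded by `true` and the letter `M` by `false`. -/
def Zword {n : ℕ} (x : ℕ → ℤ) (z : Fin n → ℂ) (σ : Equiv.Perm (Fin n))
    (w : Fin n → Bool) : ℂ :=
  ∏ k : Fin n, if w k then z (σ k) ^ (x (k : ℕ)) else z (σ k) ^ (x ((k : ℕ) + 1))

/-- `r_σ(w)`; the letter `L` is encoded by `true` and the letter `M` by `false`;
cyclic successor and predecessor of indices are given by `finRotate`. -/
def rword {n : ℕ} (c : ℝ) (z : Fin n → ℂ) (σ : Equiv.Perm (Fin n))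
    (w : Fin n → Bool) : ℂ :=
  (∏ k : Fin n, if w k = false ∧ w (finRotate n k) = true then
      Mfun c (z (σ k)) * Lfun c (z (σ (finRotate n k))) - 1 else 1) *
  (∏ k : Fin n, if w ((finRotate n).symm k) = true ∧ w k = true then
      Lfun c (z (σ k)) else 1) *
  (∏ k : Fin n, if w k = false ∧ w (finRotate n k) = false then
      Mfun c (z (σ k)) else 1)

open scoped Classical in
/-- `R_σ`: the sum of `c^{P(Ψ_x, Ψ_y)} ∏_k z_{σ(k)}^{y_k}` over integer tuples
`x₀ ≤ y₁ ≤ x₁ ≤ y₂ ≤ … ≤ x_{n-1} ≤ yₙ ≤ xₙ` with entries pairwise distinct mod `N`. -/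
def Rsum {n : ℕ} (N : ℕ) (c : ℝ) (x : ℕ → ℤ) (z : Fin n → ℂ)
    (σ : Equiv.Perm (Fin n)) : ℂ :=
  ∑ y ∈ (Fintype.piFinset fun _ : Fin n => Finset.Icc (x 0) (x n)).filter
      (fun y : Fin n → ℤ =>
        (∀ k : Fin n, x (k : ℕ) ≤ y k ∧ y k ≤ x ((k : ℕ) + 1)) ∧
        ∀ k l : Fin n, k ≠ l → ¬ ((N : ℤ) ∣ (y k - y l))),
    (∏ k : Fin n, if y k = x (k : ℕ) ∨ y k = x ((k : ℕ) + 1) then 1 else (c : ℂ) ^ 2) *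
      ∏ k : Fin n, z (σ k) ^ (y k)

/-!
Weight `y_k ∈ [x_k, x_{k+1}]` by `1` at the endpoints and `c²` inside. Summed freely over the
interval this gives `L(z) z^{x_k} + M(z) z^{x_{k+1}}`, one term per letter. Since all `y_k` lie in
the single period `[x₀, x₀ + N]`, distinctness mod `N` can only fail through a collision of
neighbours, `y_k = x_{k+1} = y_{k+1}` (cyclically: `y_n = x_n ≡ x₀ = y_1`). Inclusion–exclusion
over the set of marked collision edges turns this constraint into a product, so the sum over `y`
factorises over sites, each mark pinning its two sites to their shared endpoint. Expanding every
site into letters and resumming the marks edge by edge, the edge `k → k+1` contributes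
`L(z_{k+1})`, `1`, `M(z_k) L(z_{k+1}) - 1` or `M(z_k)` for the letters `LL`, `LM`, `ML`, `MM`,
and these products are exactly `r_σ(w)`.
-/

open Finset

lemma Ddom_subset_Ioo (Δ : ℝ) : Ddom Δ ⊆ Set.Ioo (-Real.pi) Real.pi := by
  have hμ : 0 ≤ muD Δ := by
    unfold muD
    split_ifs
    exacts [Real.arccos_nonneg _, le_rfl]
  exact Set.Ioo_subset_Ioo (by linarith) (by linarith)

lemma exp_I_mul_ne_one {t : ℝ} (h0 : t ≠ 0) (ht : |t| < 2 * Real.pi) :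
    Complex.exp (Complex.I * t) ≠ 1 := by
  rw [Ne, Complex.exp_eq_one_iff]
  rintro ⟨m, hm⟩
  have htm : t = m * (2 * Real.pi) := by simpa using congrArg Complex.im hm
  have hm0 : m = 0 := by
    obtain ⟨hlo, hhi⟩ := abs_lt.mp ht
    have hlo' : (-1 : ℝ) < m := by nlinarith [Real.pi_pos]
    have hhi' : (m : ℝ) < 1 := by nlinarith [Real.pi_pos]
    have : -1 < m ∧ m < 1 := ⟨by exact_mod_cast hlo', by exact_mod_cast hhi'⟩
    omega
  simp [htm, hm0] at h0

lemma sum_Icc_zpow_mul_one_sub {z : ℂ} (hz : z ≠ 0) {a b : ℤ} (hab : a ≤ b) :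
    (∑ t ∈ Icc a b, z ^ t) * (1 - z) = z ^ a - z ^ b * z := by
  induction b, hab using Int.leInduction with
  | base => simp only [Icc_self, sum_singleton]; ring
  | succ b hab ih =>
    rw [← insert_Icc_right_eq_Icc_add_one (by omega), sum_insert (by simp), add_mul, ih,
      zpow_add_one₀ hz]
    ring

lemma sum_Icc_weight_mul_zpow (c : ℝ) {z : ℂ} (hz0 : z ≠ 0) (hz1 : z ≠ 1) {a b : ℤ}
    (hab : a < b) :
    ∑ t ∈ Icc a b, (if t = a ∨ t = b then 1 else (c : ℂ) ^ 2) * z ^ t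
      = Lfun c z * z ^ a + Mfun c z * z ^ b := by
  have hsplit : ∀ t, (if t = a ∨ t = b then 1 else (c : ℂ) ^ 2) * z ^ t
      = c ^ 2 * z ^ t +
        (1 - c ^ 2) * ((if t = a then z ^ t else 0) + if t = b then z ^ t else 0) := by
    intro t
    by_cases ha : t = a <;> by_cases hb : t = b <;> simp [ha, hb, hab.ne, hab.ne'] <;>
      first | omega | ring
  have hgeom : ∑ t ∈ Icc a b, z ^ t = (z ^ a - z ^ b * z) / (1 - z) := by
    rw [eq_div_iff (sub_ne_zero.mpr hz1.symm), sum_Icc_zpow_mul_one_sub hz0 hab.le]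
  simp_rw [hsplit, sum_add_distrib, ← mul_sum, sum_add_distrib, sum_ite_eq', hgeom]
  simp only [mem_Icc, le_refl, hab.le, and_self, if_true, Lfun, Mfun]
  field_simp [sub_ne_zero.mpr hz1.symm]
  ring

-- `σ` marks the collision edge leaving the site, which pins `t` to the right end `b` and
-- carries the inclusion–exclusion sign; `τ` marks the edge entering it, pinning `t` to `a`.
def markFactor (a b t : ℤ) (σ τ : Bool) : ℂ :=
  (if σ then (if t = b then -1 else 0) else 1) * (if τ then (if t = a then 1 else 0) else 1)

-- With `u = true` standing for the letter `L`, a marked site sum splits as a sum over the letter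
-- of a part governed by the outgoing edge and a part governed by the incoming one.
def outFactor (m : ℂ) (u σ : Bool) : ℂ :=
  if σ then (if u then 0 else -1) else (if u then 1 else m)

def inFactor (l : ℂ) (u τ : Bool) : ℂ :=
  if τ then (if u then 1 else 0) else (if u then l else 1)

lemma sum_Icc_markFactor_mul (c : ℝ) {z : ℂ} (hz0 : z ≠ 0) (hz1 : z ≠ 1) {a b : ℤ}
    (hab : a < b) (σ τ : Bool) :
    ∑ t ∈ Icc a b, markFactor a b t σ τ * ((if t = a ∨ t = b then 1 else (c : ℂ) ^ 2) * z ^ t) =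
      ∑ u, (if u then z ^ a else z ^ b) * outFactor (Mfun c z) u σ * inFactor (Lfun c z) u τ := by
  cases σ <;> cases τ
  · simp only [markFactor, Bool.false_eq_true, if_false, mul_one, one_mul,
      sum_Icc_weight_mul_zpow c hz0 hz1 hab]
    simp [outFactor, inFactor, mul_comm]
  · rw [sum_eq_single_of_mem a (left_mem_Icc.2 hab.le) fun t _ ht => by simp [markFactor, ht]]
    simp [markFactor, outFactor, inFactor]
  · rw [sum_eq_single_of_mem b (right_mem_Icc.2 hab.le) fun t _ ht => by simp [markFactor, ht]]
    simp [markFactor, outFactor, inFactor]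
  · rw [sum_eq_zero fun t _ => by by_cases ht : t = b <;> simp [markFactor, ht, hab.ne']]
    simp [outFactor, inFactor]

def edgeFactor (m l : ℂ) : Bool → Bool → ℂ
  | true, true => l
  | true, false => 1
  | false, true => m * l - 1
  | false, false => m

lemma sum_outFactor_mul_inFactor (m l : ℂ) (u v : Bool) :
    ∑ σ, outFactor m u σ * inFactor l v σ = edgeFactor m l u v := by
  cases u <;> cases v <;> simp [outFactor, inFactor, edgeFactor, neg_add_eq_sub]

section Words

variable {ι : Type*} [Fintype ι]

lemma prod_mul_apply_symm {M : Type*} [CommMonoid M] (r : Equiv.Perm ι) (f : ι → M)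
    (g : ι → ι → M) : ∏ i, f i * g i (r.symm i) = ∏ i, f i * g (r i) i := by
  rw [prod_mul_distrib, prod_mul_distrib, ← Equiv.prod_comp r (fun i => g i (r.symm i))]
  simp only [Equiv.symm_apply_apply]

variable [DecidableEq ι]

lemma prod_noCollision_eq_sum (r : Equiv.Perm ι) (a b y : ι → ℤ) :
    ∏ i, (if y i = b i ∧ y (r i) = a (r i) then (0 : ℂ) else 1)
      = ∑ s : ι → Bool, ∏ i, markFactor (a i) (b i) (y i) (s i) (s (r.symm i)) := by
  calc _ = ∏ i, ∑ σ : Bool, (if σ then (if y i = b i then -1 else 0) else (1 : ℂ)) *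
          (if σ then (if y (r i) = a (r i) then 1 else 0) else 1) := by
        refine prod_congr rfl fun i _ => ?_
        by_cases hb : y i = b i <;> by_cases ha : y (r i) = a (r i) <;> simp [hb, ha]
    _ = _ := by
        rw [Fintype.prod_sum]
        refine sum_congr rfl fun s _ => ?_
        exact (prod_mul_apply_symm r _
          fun j k => if s k then (if y j = a j then 1 else 0) else 1).symm

lemma sum_prod_outFactor_mul_inFactor (r : Equiv.Perm ι) (m l : ι → ℂ) (w : ι → Bool) :
    ∑ s : ι → Bool, ∏ i, outFactor (m i) (w i) (s i) * inFactor (l i) (w i) (s (r.symm i))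
      = ∏ i, edgeFactor (m i) (l (r i)) (w i) (w (r i)) := by
  let g : ι → Bool → ℂ := fun i σ => outFactor (m i) (w i) σ * inFactor (l (r i)) (w (r i)) σ
  calc _ = ∑ s : ι → Bool, ∏ i, g i (s i) :=
        sum_congr rfl fun s _ => prod_mul_apply_symm r (fun i => outFactor (m i) (w i) (s i))
          fun j k => inFactor (l j) (w j) (s k)
    _ = ∏ i, ∑ σ, g i σ := (Fintype.prod_sum g).symm
    _ = _ := by simp only [g, sum_outFactor_mul_inFactor]

theorem sum_noCollision_eq_sum_words (c : ℝ) (r : Equiv.Perm ι) {a b : ι → ℤ}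
    (hab : ∀ i, a i < b i) {z : ι → ℂ} (hz0 : ∀ i, z i ≠ 0) (hz1 : ∀ i, z i ≠ 1) :
    ∑ y ∈ Fintype.piFinset (fun i => Icc (a i) (b i)),
        (∏ i, if y i = b i ∧ y (r i) = a (r i) then 0 else 1) *
          ∏ i, (if y i = a i ∨ y i = b i then 1 else (c : ℂ) ^ 2) * z i ^ y i
      = ∑ w : ι → Bool, (∏ i, edgeFactor (Mfun c (z i)) (Lfun c (z (r i))) (w i) (w (r i))) *
          ∏ i, if w i then z i ^ a i else z i ^ b i := by
  set f : ι → ℤ → ℂ := fun i t => (if t = a i ∨ t = b i then 1 else (c : ℂ) ^ 2) * z i ^ t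
  set Z : ι → Bool → ℂ := fun i u => if u then z i ^ a i else z i ^ b i
  calc _ = ∑ y ∈ Fintype.piFinset (fun i => Icc (a i) (b i)), ∑ s : ι → Bool,
          ∏ i, markFactor (a i) (b i) (y i) (s i) (s (r.symm i)) * f i (y i) := by
        refine sum_congr rfl fun y _ => ?_
        rw [prod_noCollision_eq_sum r, sum_mul]
        exact sum_congr rfl fun s _ => prod_mul_distrib.symm
    _ = ∑ s : ι → Bool, ∏ i, ∑ t ∈ Icc (a i) (b i),
          markFactor (a i) (b i) t (s i) (s (r.symm i)) * f i t := by
        rw [sum_comm]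
        simp_rw [prod_univ_sum]
    _ = ∑ s : ι → Bool, ∏ i, ∑ u, Z i u * outFactor (Mfun c (z i)) u (s i) *
          inFactor (Lfun c (z i)) u (s (r.symm i)) := by
        simp_rw [f, Z, sum_Icc_markFactor_mul c (hz0 _) (hz1 _) (hab _)]
    _ = ∑ w : ι → Bool, (∏ i, Z i (w i)) * ∑ s : ι → Bool,
          ∏ i, outFactor (Mfun c (z i)) (w i) (s i) *
            inFactor (Lfun c (z i)) (w i) (s (r.symm i)) := by
        simp_rw [Fintype.prod_sum, mul_sum, ← prod_mul_distrib, mul_assoc]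
        exact sum_comm
    _ = _ := by
        refine sum_congr rfl fun w _ => ?_
        rw [sum_prod_outFactor_mul_inFactor, mul_comm]

end Words

lemma val_finRotate {n : ℕ} (k : Fin n) :
    (finRotate n k : ℕ) = if (k : ℕ) + 1 = n then 0 else (k : ℕ) + 1 := by
  cases n with
  | zero => exact k.elim0
  | succ n => rw [coe_finRotate]; simp only [Fin.ext_iff, Fin.val_last, Nat.add_right_cancel_iff]

lemma eq_zero_or_eq_of_dvd_of_le {d N : ℤ} (hd : N ∣ d) (h0 : 0 ≤ d) (hN : d ≤ N) :
    d = 0 ∨ d = N := by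
  rcases hN.lt_or_eq with h | h
  exacts [Or.inl (Int.eq_zero_of_dvd_of_nonneg_of_lt h0 h hd), Or.inr h]

lemma pairwise_not_dvd_iff_noCollision {n N : ℕ} {x : ℕ → ℤ} (hx0 : x 0 = x n - N)
    (hx : StrictMonoOn x (Set.Iic n)) {y : Fin n → ℤ}
    (hy : ∀ k : Fin n, x k ≤ y k ∧ y k ≤ x (k + 1)) :
    (∀ k l : Fin n, k ≠ l → ¬ (N : ℤ) ∣ y k - y l) ↔
      ∀ k : Fin n, ¬(y k = x (k + 1) ∧ y (finRotate n k) = x (finRotate n k)) := by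
  have hle : ∀ {i j : ℕ}, i ≤ n → j ≤ n → (x i ≤ x j ↔ i ≤ j) := fun hi hj => hx.le_iff_le hi hj
  constructor
  · rintro hdist k ⟨hbk, hak⟩
    have hrk := val_finRotate k
    by_cases hk : finRotate n k = k
    · have := (hle (i := k + 1) (j := k) (by omega) (by omega)).1 (by rw [hk] at hak; omega)
      omega
    refine hdist k _ (Ne.symm hk) ?_
    rw [hbk, hak]
    split_ifs at hrk with h
    · rw [hrk, h, hx0, sub_sub_cancel]
    · rw [hrk, sub_self]
      exact dvd_zero _
  · intro hnc k l hkl hdvd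
    wlog hlt : k < l generalizing k l
    · exact this l k hkl.symm (dvd_sub_comm.mp hdvd) (lt_of_le_of_ne (not_lt.mp hlt) hkl.symm)
    have hlt' : (k : ℕ) < l := hlt
    obtain ⟨hk₁, hk₂⟩ := hy k
    obtain ⟨hl₁, hl₂⟩ := hy l
    have hkl' : x (k + 1) ≤ x l := (hle (by omega) (by omega)).2 (by omega)
    have hln : x (l + 1) ≤ x n := (hle (by omega) le_rfl).2 (by omega)
    have h0k : x 0 ≤ x k := (hle (by omega) (by omega)).2 (by omega)
    rcases eq_zero_or_eq_of_dvd_of_le (dvd_sub_comm.mp hdvd) (by omega) (by omega) with hd | hd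
    · have hl : (l : ℕ) = k + 1 := by
        have := (hle (i := l) (j := k + 1) (by omega) (by omega)).1 (by omega)
        omega
      have hrot : finRotate n k = l := Fin.ext (by rw [val_finRotate]; split_ifs <;> omega)
      rw [hl] at hl₁
      exact hnc k ⟨by omega, by rw [hrot, hl]; omega⟩
    · have hl : (l : ℕ) + 1 = n := by
        have := (hle (i := n) (j := l + 1) le_rfl (by omega)).1 (by omega)
        omega
      have hk : (k : ℕ) = 0 := by
        have := (hle (i := k) (j := 0) (by omega) (by omega)).1 (by omega)
        omega
      have hrot : finRotate n l = k := Fin.ext (by rw [val_finRotate, if_pos hl, hk])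
      rw [hl] at hl₂
      exact hnc l ⟨by rw [hl]; omega, by rw [hrot, hk]; rw [hk] at hk₁; omega⟩

lemma Rsum_eq_sum_noCollision {n N : ℕ} (c : ℝ) {x : ℕ → ℤ} (hx0 : x 0 = x n - N)
    (hx : StrictMonoOn x (Set.Iic n)) (z : Fin n → ℂ) (σ : Equiv.Perm (Fin n)) :
    Rsum N c x z σ =
      ∑ y ∈ Fintype.piFinset (fun k : Fin n => Icc (x k) (x (k + 1))),
        (∏ k, if y k = x (k + 1) ∧ y (finRotate n k) = x (finRotate n k) then 0 else 1) *
          ∏ k, (if y k = x k ∨ y k = x (k + 1) then 1 else (c : ℂ) ^ 2) * z (σ k) ^ y k := by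
  calc _ = ∑ y ∈ Fintype.piFinset (fun k : Fin n => Icc (x k) (x (k + 1)))
          with ∀ k : Fin n, ¬(y k = x (k + 1) ∧ y (finRotate n k) = x (finRotate n k)),
        ∏ k, (if y k = x k ∨ y k = x (k + 1) then 1 else (c : ℂ) ^ 2) * z (σ k) ^ y k := by
        refine sum_congr (ext fun y => ?_) fun _ _ => prod_mul_distrib.symm
        simp only [mem_filter, Fintype.mem_piFinset, mem_Icc]
        constructor
        · rintro ⟨-, hy, hdist⟩
          exact ⟨hy, (pairwise_not_dvd_iff_noCollision hx0 hx hy).1 hdist⟩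
        · rintro ⟨hy, hnc⟩
          refine ⟨fun k => ⟨?_, ?_⟩, hy, (pairwise_not_dvd_iff_noCollision hx0 hx hy).2 hnc⟩
          · exact (hx.monotoneOn (by simp) (by simp [k.isLt.le]) (Nat.zero_le _)).trans (hy k).1
          · exact (hy k).2.trans (hx.monotoneOn (by simp [k.isLt]) (by simp) k.isLt)
    _ = _ := by
        rw [sum_filter]
        refine sum_congr rfl fun y _ => ?_
        rw [← boole_mul]
        congr 1
        rw [prod_congr rfl fun k _ => (ite_not _ _ _).symm, Fintype.prod_boole]
        -- the two sides differ only in the `Decidable` instance of the `∀ k : Fin n`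
        congr

lemma rword_eq_prod_edgeFactor {n : ℕ} (c : ℝ) (z : Fin n → ℂ) (σ : Equiv.Perm (Fin n))
    (w : Fin n → Bool) :
    rword c z σ w = ∏ k, edgeFactor (Mfun c (z (σ k))) (Lfun c (z (σ (finRotate n k))))
      (w k) (w (finRotate n k)) := by
  rw [rword, ← Equiv.prod_comp (finRotate n)
    (fun k => if w ((finRotate n).symm k) = true ∧ w k = true then Lfun c (z (σ k)) else 1)]
  simp only [Equiv.symm_apply_apply, ← prod_mul_distrib]
  refine prod_congr rfl fun k _ => ?_
  cases w k <;> cases w (finRotate n k) <;> simp [edgeFactor]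

theorem Rsum_eq_sum_words_general
    (N n : ℕ)
    (c : ℝ) (Δ : ℝ)
    (p : Fin n → ℝ) (hpD : ∀ j, p j ∈ Ddom Δ)
    (hnonzero : ∀ j, p j ≠ 0)
    (x : ℕ → ℤ) (hx0 : x 0 = x n - N)
    (hxmono : ∀ i j, i < j → j ≤ n → x i < x j)
    (σ : Equiv.Perm (Fin n)) :
    Rsum N c x (zOf p) σ = ∑ w : Fin n → Bool, rword c (zOf p) σ w * Zword x (zOf p) σ w := by
  have hz0 : ∀ k, zOf p (σ k) ≠ 0 := fun k => Complex.exp_ne_zero _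
  have hz1 : ∀ k, zOf p (σ k) ≠ 1 := fun k => by
    obtain ⟨hlo, hhi⟩ := Ddom_subset_Ioo Δ (hpD (σ k))
    exact exp_I_mul_ne_one (hnonzero _)
      (abs_lt.2 ⟨by linarith [Real.pi_pos], by linarith [Real.pi_pos]⟩)
  rw [Rsum_eq_sum_noCollision c hx0 (fun i _ j hj hij => hxmono i j hij hj),
    sum_noCollision_eq_sum_words c (finRotate n) (fun k => hxmono _ _ (Nat.lt_add_one _) k.isLt)
      hz0 hz1]
  simp_rw [rword_eq_prod_edgeFactor]
  rfl

/-- **Lemma 3.5: encoding of `R_σ` with words.** -/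
theorem Rsum_eq_sum_words
    (N n : ℕ) (hN : 0 < N)
    (c : ℝ) (hc : 0 < c) (Δ : ℝ) (hΔ : Δ = (2 - c ^ 2) / 2)
    (p : Fin n → ℝ) (hpD : ∀ j, p j ∈ Ddom Δ)
    (hdistinct : Function.Injective p)
    (hnonzero : ∀ j, p j ≠ 0)
    (x : ℕ → ℤ) (hx0 : x 0 = x n - N)
    (hxmono : ∀ i j, i < j → j ≤ n → x i < x j)
    (hx1 : 1 ≤ x 1) (hxN : x n ≤ (N : ℤ))
    (σ : Equiv.Perm (Fin n)) :
    Rsum N c x (zOf p) σ = ∑ w : Fin n → Bool, rword c (zOf p) σ w * Zword x (zOf p) σ w :=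
  Rsum_eq_sum_words_general N n c Δ p hpD hnonzero x hx0 hxmono σ
end
end

section
/- (Singular case, contribution of constant words.) Assume p₁ = 0 and p₂,…,pₙ ∈ D_Δ are distinct, nonzero, and (p₁,…,pₙ) satisfies the Bethe equations. Fix 1 ≤ x₁ < … < xₙ ≤ N, x₀ = xₙ − N, and set Π_M = Π_{k=2}^n M(z_k). For ε ∉ {0,p₂,…,pₙ}, let r_σ^ε(w) and Z_σ^ε(w) be defined as r_σ(w), Z_σ(w) but with p₁ replaced by ε (so z₁ replaced by e^{iε}), and T₀(ε) = Σ_{w ∈ {L⋯L, M⋯M}} Σ_{σ∈S_n} A_σ r_σ^ε(w) Z_σ^ε(w). Then lim_{ε→0} T₀(ε) = (2 − c²) Π_M ψ(x) + c²N Π_M Σ_{σ∈S_n : σ(n)=1} A_σ Π_{k=1}^n z_{σ(k)}^{x_k}. -/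
open scoped BigOperators
open Complex

noncomputable section

/-!
Composing `σ` with the cyclic shift `ρ : k ↦ k + 1` turns the all-`L` word into the all-`M` word:
`Z_σ(L⋯L) = z_{σ(1)}^{-N} Z_{σρ}(M⋯M)` because `x₀ = xₙ - N`, and the Bethe equations make `A_σ`
quasi-periodic, `A_{σρ⁻¹} = A_σ z_{σ(n)}^N`. The Bethe equation of the zero rapidity reads
`∏_{k ≥ 2} L(z_k) = Π_M`. Hence, with `u = e^{iε}`,
`T₀(ε) = Π_M ∑_σ A_σ (L(u) w_σ + M(u)) Z_σ^ε(M⋯M)`, where `w_σ = u^{-N}` if `σ(n) = 1` and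
`w_σ = 1` otherwise. As `L + M = 2 - c²`, only the terms with `σ(n) = 1` feel the pole of `L`
at `u = 1`, and there `L(u) u^{-N} + M(u) → 2 - c² + c² N`, the difference quotient of `u^{1-N}`
at `1` producing the extra `c² N`.
-/

open Finset Filter Topology

theorem prod_comp_update_eq_mul_prod_erase {ι α M : Type*} [Fintype ι] [DecidableEq ι]
    [CommMonoid M] (f : α → M) (z : ι → α) (i : ι) (u : α) :
    ∏ j, f (Function.update z i u j) = f u * ∏ j ∈ univ.erase i, f (z j) := by
  rw [← mul_prod_erase _ _ (mem_univ i), Function.update_self]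
  congr 1
  exact prod_congr rfl fun j hj => by rw [Function.update_of_ne (ne_of_mem_erase hj)]

theorem prod_lt_pairs_finRotate_inv {M : Type*} [CommMonoid M] {m : ℕ}
    (f : Fin (m + 1) → Fin (m + 1) → M) :
    (∏ kl ∈ univ.filter (fun kl : Fin (m + 1) × Fin (m + 1) => kl.1 < kl.2),
        f ((finRotate (m + 1))⁻¹ kl.1) ((finRotate (m + 1))⁻¹ kl.2)) * ∏ i, f i (Fin.last m) =
      (∏ kl ∈ univ.filter (fun kl : Fin (m + 1) × Fin (m + 1) => kl.1 < kl.2), f kl.1 kl.2) *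
        ∏ i, f (Fin.last m) i := by
  have hsucc : ∀ i : Fin m, (finRotate (m + 1))⁻¹ i.succ = i.castSucc := fun i => by
    rw [Equiv.Perm.inv_def, Equiv.symm_apply_eq, finRotate_apply, Fin.coeSucc_eq_succ]
  have hzero : (finRotate (m + 1))⁻¹ 0 = Fin.last m := by
    rw [Equiv.Perm.inv_def, Equiv.symm_apply_eq, finRotate_last]
  have hlhs : (∏ kl ∈ univ.filter (fun kl : Fin (m + 1) × Fin (m + 1) => kl.1 < kl.2),
        f ((finRotate (m + 1))⁻¹ kl.1) ((finRotate (m + 1))⁻¹ kl.2)) =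
      (∏ j : Fin m, f (Fin.last m) j.castSucc) *
        ∏ i : Fin m, ∏ j : Fin m, if i < j then f i.castSucc j.castSucc else 1 := by
    simp only [prod_filter, Fintype.prod_prod_type, Fin.prod_univ_succ (n := m), Fin.succ_pos,
      Fin.not_lt_zero, Fin.succ_lt_succ_iff, hsucc, hzero, if_true, if_false, one_mul]
  have hrhs : (∏ kl ∈ univ.filter (fun kl : Fin (m + 1) × Fin (m + 1) => kl.1 < kl.2),
        f kl.1 kl.2) =
      (∏ i : Fin m, ∏ j : Fin m, if i < j then f i.castSucc j.castSucc else 1) *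
        ∏ i : Fin m, f i.castSucc (Fin.last m) := by
    simp only [prod_filter, Fintype.prod_prod_type, Fin.prod_univ_castSucc (n := m),
      lt_self_iff_false, Fin.castSucc_lt_last, Fin.castSucc_lt_castSucc_iff,
      not_lt.2 (Fin.le_last _), if_true, if_false, mul_one, prod_const_one, prod_mul_distrib]
  rw [hlhs, hrhs, Fin.prod_univ_castSucc (fun i => f i (Fin.last m)),
    Fin.prod_univ_castSucc (fun i => f (Fin.last m) i)]
  ac_rfl

def IsScatteringPhase (Δ : ℝ) (Θ : ℝ → ℝ → ℝ) : Prop :=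
  ∀ a ∈ Ddom Δ, ∀ b ∈ Ddom Δ,
    Complex.exp (-(Complex.I * (Θ a b : ℂ))) =
      Complex.exp (Complex.I * ((a : ℂ) - (b : ℂ))) * Sfun Δ a b / Sfun Δ b a

def expSfun (Δ a b : ℝ) : ℂ := Complex.exp (Complex.I * (a : ℂ)) * Sfun Δ a b

theorem Acoef_eq_sign_mul_prod {n : ℕ} (Δ : ℝ) (p : Fin n → ℝ) (σ : Equiv.Perm (Fin n)) :
    Acoef Δ p σ = ((Equiv.Perm.sign σ : ℤ) : ℂ) *
      ∏ kl ∈ univ.filter (fun kl : Fin n × Fin n => kl.1 < kl.2),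
        expSfun Δ (p (σ kl.1)) (p (σ kl.2)) :=
  rfl

section Phase

variable {Δ : ℝ} {Θ : ℝ → ℝ → ℝ} {a b : ℝ}

theorem IsScatteringPhase.Sfun_ne_zero (hΘ : IsScatteringPhase Δ Θ) (ha : a ∈ Ddom Δ)
    (hb : b ∈ Ddom Δ) : Sfun Δ b a ≠ 0 := by
  intro h
  have := hΘ a ha b hb
  rw [h, div_zero] at this
  exact Complex.exp_ne_zero _ this

theorem IsScatteringPhase.expSfun_ne_zero (hΘ : IsScatteringPhase Δ Θ) (ha : a ∈ Ddom Δ)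
    (hb : b ∈ Ddom Δ) : expSfun Δ b a ≠ 0 :=
  mul_ne_zero (Complex.exp_ne_zero _) (hΘ.Sfun_ne_zero ha hb)

theorem IsScatteringPhase.expSfun_eq (hΘ : IsScatteringPhase Δ Θ) (ha : a ∈ Ddom Δ)
    (hb : b ∈ Ddom Δ) :
    expSfun Δ a b = Complex.exp (-(Complex.I * (Θ a b : ℂ))) * expSfun Δ b a := by
  have hS := hΘ.Sfun_ne_zero ha hb
  rw [hΘ a ha b hb, expSfun, expSfun, mul_sub, Complex.exp_sub]
  field_simp

theorem IsScatteringPhase.prod_expSfun_eq (hΘ : IsScatteringPhase Δ Θ) {m N : ℕ}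
    {p : Fin (m + 1) → ℝ} (hpD : ∀ j, p j ∈ Ddom Δ) {j : Fin (m + 1)}
    (hBE : Complex.exp (Complex.I * (N : ℂ) * (p j : ℂ)) =
      (-1 : ℂ) ^ m * Complex.exp (-(Complex.I * ((∑ k, Θ (p j) (p k) : ℝ) : ℂ)))) :
    ∏ k, expSfun Δ (p j) (p k) = (-1) ^ m * zOf p j ^ N * ∏ k, expSfun Δ (p k) (p j) := by
  have hphase : Complex.exp (-(Complex.I * ((∑ k, Θ (p j) (p k) : ℝ) : ℂ))) =
      (-1) ^ m * zOf p j ^ N := by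
    rw [zOf, ← Complex.exp_nat_mul, ← mul_assoc, mul_comm (N : ℂ), hBE, ← mul_assoc, ← mul_pow]
    simp
  rw [prod_congr rfl fun k _ => hΘ.expSfun_eq (hpD j) (hpD k), prod_mul_distrib,
    ← Complex.exp_sum, ← hphase]
  push_cast
  rw [mul_sum, sum_neg_distrib]

end Phase

theorem Acoef_mul_finRotate_inv_s14 {m : ℕ} {Δ : ℝ} {p : Fin (m + 1) → ℝ} {e : Fin (m + 1) → ℂ}
    (hne : ∀ j k, expSfun Δ (p k) (p j) ≠ 0)
    (hBE : ∀ j, ∏ k, expSfun Δ (p j) (p k) = (-1) ^ m * e j * ∏ k, expSfun Δ (p k) (p j))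
    (σ : Equiv.Perm (Fin (m + 1))) :
    Acoef Δ p (σ * (finRotate (m + 1))⁻¹) = Acoef Δ p σ * e (σ (Fin.last m)) := by
  set j := σ (Fin.last m)
  have hpairs := prod_lt_pairs_finRotate_inv (fun k l => expSfun Δ (p (σ k)) (p (σ l)))
  beta_reduce at hpairs
  rw [Equiv.prod_comp σ (fun k => expSfun Δ (p k) (p j)),
    Equiv.prod_comp σ (fun k => expSfun Δ (p j) (p k)), hBE j] at hpairs
  have hsign : ((Equiv.Perm.sign (σ * (finRotate (m + 1))⁻¹) : ℤ) : ℂ) =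
      (-1) ^ m * ((Equiv.Perm.sign σ : ℤ) : ℂ) := by
    simp [Equiv.Perm.sign_mul, sign_finRotate, mul_comm]
  have hprod : (∏ kl ∈ univ.filter (fun kl : Fin (m + 1) × Fin (m + 1) => kl.1 < kl.2),
      expSfun Δ (p ((σ * (finRotate (m + 1))⁻¹) kl.1)) (p ((σ * (finRotate (m + 1))⁻¹) kl.2))) =
      (-1) ^ m * e j * ∏ kl ∈ univ.filter (fun kl : Fin (m + 1) × Fin (m + 1) => kl.1 < kl.2),
        expSfun Δ (p (σ kl.1)) (p (σ kl.2)) :=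
    mul_right_cancel₀ (b := ∏ k, expSfun Δ (p k) (p j)) (prod_ne_zero_iff.2 fun k _ => hne j k)
      (hpairs.trans (by ring))
  have hsq : (-1 : ℂ) ^ m * (-1) ^ m = 1 := by rw [← mul_pow]; norm_num
  rw [Acoef_eq_sign_mul_prod, Acoef_eq_sign_mul_prod, hsign, hprod]
  linear_combination ((Equiv.Perm.sign σ : ℤ) : ℂ) * e j *
    (∏ kl ∈ univ.filter (fun kl : Fin (m + 1) × Fin (m + 1) => kl.1 < kl.2),
      expSfun Δ (p (σ kl.1)) (p (σ kl.2))) * hsq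

theorem exp_I_mul_ne_one_of_mem_Ddom {Δ t : ℝ} (ht : t ∈ Ddom Δ) (h0 : t ≠ 0) :
    Complex.exp (Complex.I * t) ≠ 1 := by
  have hμ : 0 ≤ muD Δ := by
    unfold muD
    split_ifs
    exacts [Real.arccos_nonneg _, le_rfl]
  obtain ⟨h₁, h₂⟩ := ht
  intro h
  rw [← Complex.exp_zero] at h
  have := Complex.exp_inj_of_neg_pi_lt_of_le_pi (by simp; linarith) (by simp; linarith)
    (by simp [Real.pi_pos]) (by simp [Real.pi_pos.le]) h
  simp_all

section LM

variable {c b : ℝ}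

theorem Lfun_mul_one_sub (hb : Complex.exp (Complex.I * b) ≠ 1) :
    Lfun c (Complex.exp (Complex.I * b)) * (1 - Complex.exp (Complex.I * b)) =
      expSfun ((2 - c ^ 2) / 2) b 0 := by
  have h : (1 : ℂ) - Complex.exp (Complex.I * b) ≠ 0 := sub_ne_zero.2 hb.symm
  rw [Lfun, expSfun, Sfun, Complex.exp_neg]
  field_simp
  push_cast
  simp
  ring

theorem Mfun_mul_one_sub (hb : Complex.exp (Complex.I * b) ≠ 1) :
    Mfun c (Complex.exp (Complex.I * b)) * (1 - Complex.exp (Complex.I * b)) =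
      -expSfun ((2 - c ^ 2) / 2) 0 b := by
  have h : (1 : ℂ) - Complex.exp (Complex.I * b) ≠ 0 := sub_ne_zero.2 hb.symm
  rw [Mfun, expSfun, Sfun]
  field_simp
  push_cast
  simp
  ring

theorem Lfun_add_Mfun {z : ℂ} (hz : z ≠ 1) : Lfun c z + Mfun c z = 2 - (c : ℂ) ^ 2 := by
  have h : (1 : ℂ) - z ≠ 0 := sub_ne_zero.2 hz.symm
  rw [Lfun, Mfun]
  field_simp
  ring

theorem Lfun_mul_add_Mfun {z : ℂ} (hz : z ≠ 1) (w : ℂ) :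
    Lfun c z * w + Mfun c z = 1 + w - (c : ℂ) ^ 2 * ((z * w - 1) / (z - 1)) := by
  have h : z - 1 ≠ 0 := sub_ne_zero.2 hz
  have h' : (1 : ℂ) - z ≠ 0 := sub_ne_zero.2 hz.symm
  rw [Lfun, Mfun]
  field_simp
  ring

end LM

theorem tendsto_Lfun_mul_inv_pow_add_Mfun (c : ℝ) (N : ℕ) :
    Tendsto (fun u : ℂ => Lfun c u * (u ^ N)⁻¹ + Mfun c u) (𝓝[≠] 1)
      (𝓝 (2 - (c : ℂ) ^ 2 + (c : ℂ) ^ 2 * N)) := by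
  have hderiv := hasDerivAt_zpow (1 - N : ℤ) (1 : ℂ) (Or.inl one_ne_zero)
  have hslope := (hasDerivAt_iff_tendsto_slope.1 hderiv).const_mul (-(c : ℂ) ^ 2)
  have hinv : Tendsto (fun u : ℂ => (u ^ N)⁻¹) (𝓝[≠] 1) (𝓝 1) := by
    have : ContinuousAt (fun u : ℂ => (u ^ N)⁻¹) 1 :=
      (continuous_pow N).continuousAt.inv₀ (by simp)
    simpa using this.tendsto.mono_left nhdsWithin_le_nhds
  have hlim := (hinv.const_add 1).add hslope
  rw [show (1 : ℂ) + 1 + -(c : ℂ) ^ 2 * (((1 - N : ℤ) : ℂ) * 1 ^ (1 - N - 1 : ℤ)) =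
    2 - (c : ℂ) ^ 2 + (c : ℂ) ^ 2 * N by rw [one_zpow]; push_cast; ring] at hlim
  refine hlim.congr' ?_
  filter_upwards [self_mem_nhdsWithin,
    (eventually_ne_nhds one_ne_zero).filter_mono nhdsWithin_le_nhds] with u hu1 hu0
  rw [Lfun_mul_add_Mfun hu1, slope_def_field, one_zpow, zpow_sub₀ hu0, zpow_one, zpow_natCast]
  ring

theorem prod_Lfun_erase_eq_prod_Mfun_erase {m : ℕ} {c : ℝ} {p : Fin (m + 1) → ℝ}
    (hp0 : p 0 = 0) (hz : ∀ j, j ≠ 0 → Complex.exp (Complex.I * (p j : ℂ)) ≠ 1)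
    (hne : expSfun ((2 - c ^ 2) / 2) 0 0 ≠ 0)
    (hBE : ∏ k, expSfun ((2 - c ^ 2) / 2) (p 0) (p k) =
      (-1) ^ m * ∏ k, expSfun ((2 - c ^ 2) / 2) (p k) (p 0)) :
    ∏ j ∈ univ.erase 0, Lfun c (zOf p j) = ∏ j ∈ univ.erase 0, Mfun c (zOf p j) := by
  have hcard : #(univ.erase (0 : Fin (m + 1))) = m := by simp
  rw [← mul_prod_erase _ _ (mem_univ 0), ← mul_prod_erase _ _ (mem_univ 0), hp0] at hBE
  have hrest := mul_left_cancel₀ hne (hBE.trans (mul_left_comm _ _ _))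
  simp only [zOf]
  have hQ : ∏ j ∈ univ.erase (0 : Fin (m + 1)), (1 - Complex.exp (Complex.I * (p j : ℂ))) ≠ 0 :=
    prod_ne_zero_iff.2 fun j hj => sub_ne_zero.2 (hz j (ne_of_mem_erase hj)).symm
  refine mul_right_cancel₀ hQ ?_
  rw [← prod_mul_distrib, ← prod_mul_distrib,
    prod_congr rfl fun j hj => Lfun_mul_one_sub (hz j (ne_of_mem_erase hj)),
    prod_congr rfl fun j hj => Mfun_mul_one_sub (hz j (ne_of_mem_erase hj)), prod_neg, hcard,
    hrest, ← mul_assoc, ← mul_pow]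
  simp

section Words

variable {n : ℕ} (c : ℝ) (x : ℕ → ℤ) (z : Fin n → ℂ) (σ : Equiv.Perm (Fin n))

theorem rword_const_true : rword c z σ (fun _ => true) = ∏ j, Lfun c (z j) := by
  simp [rword, Equiv.prod_comp σ (fun j => Lfun c (z j))]

theorem rword_const_false : rword c z σ (fun _ => false) = ∏ j, Mfun c (z j) := by
  simp [rword, Equiv.prod_comp σ (fun j => Mfun c (z j))]

theorem Zword_const_false :
    Zword x z σ (fun _ => false) = ∏ k, z (σ k) ^ x ((k : ℕ) + 1) := by
  simp [Zword]

end Words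

theorem Zword_const_true_mul_pow {m N : ℕ} {x : ℕ → ℤ} (hx0 : x 0 = x (m + 1) - N)
    {z : Fin (m + 1) → ℂ} (σ : Equiv.Perm (Fin (m + 1))) (hz : z (σ 0) ≠ 0) :
    Zword x z σ (fun _ => true) * z (σ 0) ^ N =
      Zword x z (σ * finRotate (m + 1)) (fun _ => false) := by
  have hrot : ∀ i : Fin m, finRotate (m + 1) i.castSucc = i.succ := fun i => by
    rw [finRotate_apply, Fin.coeSucc_eq_succ]
  rw [Zword, Zword, Fin.prod_univ_succ, Fin.prod_univ_castSucc]
  simp only [if_true, Bool.false_eq_true, if_false, Equiv.Perm.mul_apply, hrot, finRotate_last,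
    Fin.val_zero, Fin.val_succ, Fin.val_castSucc, Fin.val_last, hx0, zpow_sub₀ hz, zpow_natCast]
  field_simp

theorem sum_mul_Zword_const_true {m N : ℕ} {x : ℕ → ℤ} (hx0 : x 0 = x (m + 1) - N)
    {z : Fin (m + 1) → ℂ} (hz : ∀ j, z j ≠ 0) {A : Equiv.Perm (Fin (m + 1)) → ℂ}
    {a : Fin (m + 1) → ℂ} (hA : ∀ σ, A (σ * (finRotate (m + 1))⁻¹) = A σ * a (σ (Fin.last m))) :
    ∑ σ, A σ * Zword x z σ (fun _ => true) =
      ∑ σ, A σ * (a (σ (Fin.last m)) / z (σ (Fin.last m)) ^ N) * Zword x z σ (fun _ => false) := by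
  symm
  rw [← Equiv.sum_comp (Equiv.mulRight (finRotate (m + 1)))]
  refine sum_congr rfl fun σ _ => ?_
  have hAσ := hA (σ * finRotate (m + 1))
  rw [mul_inv_cancel_right] at hAσ
  simp only [Equiv.coe_mulRight, Equiv.Perm.mul_apply, finRotate_last] at hAσ ⊢
  rw [← Zword_const_true_mul_pow hx0 σ (hz _), hAσ]
  field_simp [pow_ne_zero N (hz (σ 0))]

/-- `T₀` as a function of the momenta `z`, with the coefficients `A` kept fixed. -/
def constWordsSum {n : ℕ} (c : ℝ) (x : ℕ → ℤ) (A : Equiv.Perm (Fin n) → ℂ) (z : Fin n → ℂ) :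
    ℂ :=
  (∑ σ, A σ * (rword c z σ (fun _ => true) * Zword x z σ (fun _ => true))) +
    ∑ σ, A σ * (rword c z σ (fun _ => false) * Zword x z σ (fun _ => false))

section Singular

variable {m N : ℕ} {c : ℝ} {x : ℕ → ℤ} {z : Fin (m + 1) → ℂ} {A : Equiv.Perm (Fin (m + 1)) → ℂ}

theorem constWordsSum_update_zero (hx0 : x 0 = x (m + 1) - N) (hz : ∀ j, z j ≠ 0) (hz0 : z 0 = 1)
    (hA : ∀ σ, A (σ * (finRotate (m + 1))⁻¹) = A σ * z (σ (Fin.last m)) ^ N)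
    (hLM : ∏ j ∈ univ.erase 0, Lfun c (z j) = ∏ j ∈ univ.erase 0, Mfun c (z j))
    {u : ℂ} (hu : u ≠ 0) :
    constWordsSum c x A (Function.update z 0 u) =
      (∏ j ∈ univ.erase 0, Mfun c (z j)) * ∑ σ, A σ *
        ((Lfun c u * (if σ (Fin.last m) = 0 then (u ^ N)⁻¹ else 1) + Mfun c u) *
          ∏ k, Function.update z 0 u (σ k) ^ x ((k : ℕ) + 1)) := by
  set z' := Function.update z 0 u
  have hz' : ∀ j, z' j ≠ 0 := fun j => by
    rcases eq_or_ne j 0 with rfl | hj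
    · simpa [z'] using hu
    · simpa [z', hj] using hz j
  have hweight : ∀ j, z j ^ N / z' j ^ N = if j = 0 then (u ^ N)⁻¹ else 1 := fun j => by
    rcases eq_or_ne j 0 with rfl | hj
    · simp [z', hz0]
    · simp [z', hj, hz j]
  calc constWordsSum c x A z'
      = Lfun c u * (∏ j ∈ univ.erase 0, Mfun c (z j)) * ∑ σ, A σ * Zword x z' σ (fun _ => true) +
          Mfun c u * (∏ j ∈ univ.erase 0, Mfun c (z j)) *
            ∑ σ, A σ * Zword x z' σ (fun _ => false) := by
        simp only [constWordsSum, rword_const_true, rword_const_false, z',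
          prod_comp_update_eq_mul_prod_erase, hLM, mul_sum]
        congr 1 <;> exact sum_congr rfl fun σ _ => by ring
    _ = _ := by
        rw [sum_mul_Zword_const_true (a := fun j => z j ^ N) hx0 hz' hA, mul_sum, mul_sum, mul_sum,
          ← sum_add_distrib]
        refine sum_congr rfl fun σ _ => ?_
        rw [hweight, Zword_const_false]
        ring

theorem tendsto_prod_update_zero_zpow (hz : ∀ j, z j ≠ 0) (hz0 : z 0 = 1)
    (σ : Equiv.Perm (Fin (m + 1))) :
    Tendsto (fun u => ∏ k, Function.update z 0 u (σ k) ^ x ((k : ℕ) + 1)) (𝓝[≠] 1)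
      (𝓝 (∏ k, z (σ k) ^ x ((k : ℕ) + 1))) := by
  have hz1 : Function.update z 0 1 = z := by rw [← hz0, Function.update_eq_self]
  refine tendsto_nhdsWithin_of_tendsto_nhds (tendsto_finsetProd _ fun k _ => ?_)
  have hcont : ContinuousAt (fun u => Function.update z 0 u (σ k)) 1 :=
    ((continuous_apply (σ k)).comp
      (continuous_const.update 0 continuous_id (f := fun _ : ℂ => z))).continuousAt
  simpa only [hz1] using (hcont.zpow₀ _ (Or.inl (by rw [hz1]; exact hz _))).tendsto

theorem tendsto_constWordsSum_update_zero (hx0 : x 0 = x (m + 1) - N) (hz : ∀ j, z j ≠ 0)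
    (hz0 : z 0 = 1)
    (hA : ∀ σ, A (σ * (finRotate (m + 1))⁻¹) = A σ * z (σ (Fin.last m)) ^ N)
    (hLM : ∏ j ∈ univ.erase 0, Lfun c (z j) = ∏ j ∈ univ.erase 0, Mfun c (z j)) :
    Tendsto (fun u => constWordsSum c x A (Function.update z 0 u)) (𝓝[≠] 1)
      (𝓝 ((2 - (c : ℂ) ^ 2) * (∏ j ∈ univ.erase 0, Mfun c (z j)) *
          (∑ σ, A σ * ∏ k, z (σ k) ^ x ((k : ℕ) + 1)) +
        (c : ℂ) ^ 2 * N * (∏ j ∈ univ.erase 0, Mfun c (z j)) *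
          ∑ σ ∈ univ.filter (fun σ : Equiv.Perm (Fin (m + 1)) => σ (Fin.last m) = 0),
            A σ * ∏ k, z (σ k) ^ x ((k : ℕ) + 1))) := by
  set PM := ∏ j ∈ univ.erase 0, Mfun c (z j)
  have hlimit : (2 - (c : ℂ) ^ 2) * PM * (∑ σ, A σ * ∏ k, z (σ k) ^ x ((k : ℕ) + 1)) +
      (c : ℂ) ^ 2 * N * PM *
        ∑ σ ∈ univ.filter (fun σ : Equiv.Perm (Fin (m + 1)) => σ (Fin.last m) = 0),
          A σ * ∏ k, z (σ k) ^ x ((k : ℕ) + 1) =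
      PM * ∑ σ, A σ * ((2 - (c : ℂ) ^ 2 + if σ (Fin.last m) = 0 then (c : ℂ) ^ 2 * N else 0) *
        ∏ k, z (σ k) ^ x ((k : ℕ) + 1)) := by
    rw [sum_filter, mul_sum, mul_sum, mul_sum, ← sum_add_distrib]
    refine sum_congr rfl fun σ _ => ?_
    split_ifs <;> ring
  rw [hlimit]
  have heq : ∀ᶠ u in 𝓝[≠] (1 : ℂ), PM * ∑ σ, A σ *
      ((Lfun c u * (if σ (Fin.last m) = 0 then (u ^ N)⁻¹ else 1) + Mfun c u) *
        ∏ k, Function.update z 0 u (σ k) ^ x ((k : ℕ) + 1)) =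
      constWordsSum c x A (Function.update z 0 u) := by
    filter_upwards [(eventually_ne_nhds one_ne_zero).filter_mono nhdsWithin_le_nhds] with u hu
    exact (constWordsSum_update_zero hx0 hz hz0 hA hLM hu).symm
  refine Tendsto.congr' heq (.const_mul _ (tendsto_finsetSum _ fun σ _ => .const_mul _ ?_))
  refine .mul ?_ (tendsto_prod_update_zero_zpow hz hz0 σ)
  split_ifs
  · exact tendsto_Lfun_mul_inv_pow_add_Mfun c N
  · refine tendsto_const_nhds.congr' ?_
    filter_upwards [self_mem_nhdsWithin] with u hu
    rw [mul_one, Lfun_add_Mfun hu, add_zero]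

end Singular

theorem zOf_update {n : ℕ} (p : Fin n → ℝ) (i : Fin n) (t : ℝ) :
    zOf (Function.update p i t) = Function.update (zOf p) i (Complex.exp (Complex.I * t)) := by
  funext j
  exact Function.apply_update (fun _ (t : ℝ) => Complex.exp (Complex.I * (t : ℂ))) p i t j

theorem tendsto_exp_I_mul_nhdsNE :
    Tendsto (fun t : ℝ => Complex.exp (Complex.I * t)) (𝓝[≠] 0) (𝓝[≠] 1) := by
  have hd := (((hasDerivAt_id (0 : ℝ)).ofReal_comp).const_mul Complex.I).cexp
  simp only [id, Complex.ofReal_zero, Complex.ofReal_one, mul_zero, Complex.exp_zero, mul_one,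
    one_mul] at hd
  have := hd.tendsto_nhdsNE Complex.I_ne_zero
  rwa [Complex.ofReal_zero, mul_zero, Complex.exp_zero] at this

/-- **Lemma 3.8: the limit of the contribution `T₀(ε)` of the two constant words in the
singular case `p₁ = 0`.** -/
theorem T0_limit_singular
    (N n : ℕ) (hn : 0 < n)
    (c : ℝ) (Δ : ℝ) (hΔ : Δ = (2 - c ^ 2) / 2)
    (Θ : ℝ → ℝ → ℝ)
    (hΘ : ∀ a ∈ Ddom Δ, ∀ b ∈ Ddom Δ,
      Complex.exp (-(Complex.I * (Θ a b : ℂ))) =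
        Complex.exp (Complex.I * ((a : ℂ) - (b : ℂ))) * Sfun Δ a b / Sfun Δ b a)
    (p : Fin n → ℝ) (hpD : ∀ j, p j ∈ Ddom Δ)
    (hp0 : p ⟨0, hn⟩ = 0)
    (hnonzero : ∀ j, j ≠ ⟨0, hn⟩ → p j ≠ 0)
    (hBE : ∀ j, Complex.exp (Complex.I * (N : ℂ) * (p j : ℂ)) =
      (-1 : ℂ) ^ (n - 1) *
        Complex.exp (-(Complex.I * ((∑ k, Θ (p j) (p k) : ℝ) : ℂ))))
    (x : ℕ → ℤ) (hx0 : x 0 = x n - N)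
    :
    Filter.Tendsto
      (fun ε : ℝ =>
        (∑ σ : Equiv.Perm (Fin n), Acoef Δ p σ *
            (rword c (zOf (Function.update p ⟨0, hn⟩ ε)) σ (fun _ => true) *
              Zword x (zOf (Function.update p ⟨0, hn⟩ ε)) σ (fun _ => true))) +
          ∑ σ : Equiv.Perm (Fin n), Acoef Δ p σ *
            (rword c (zOf (Function.update p ⟨0, hn⟩ ε)) σ (fun _ => false) *
              Zword x (zOf (Function.update p ⟨0, hn⟩ ε)) σ (fun _ => false)))
      (nhdsWithin 0 (Set.range p)ᶜ)
      (nhds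
        ((2 - (c : ℂ) ^ 2) *
            (∏ k ∈ Finset.univ.erase (⟨0, hn⟩ : Fin n), Mfun c (zOf p k)) *
            (∑ σ : Equiv.Perm (Fin n), Acoef Δ p σ *
              ∏ k : Fin n, zOf p (σ k) ^ (x ((k : ℕ) + 1))) +
          (c : ℂ) ^ 2 * (N : ℂ) *
            (∏ k ∈ Finset.univ.erase (⟨0, hn⟩ : Fin n), Mfun c (zOf p k)) *
            ∑ σ ∈ Finset.univ.filter
                (fun σ : Equiv.Perm (Fin n) => σ ⟨n - 1, by omega⟩ = ⟨0, hn⟩),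
              Acoef Δ p σ * ∏ k : Fin n, zOf p (σ k) ^ (x ((k : ℕ) + 1)))) := by
  obtain ⟨m, rfl⟩ : ∃ m, n = m + 1 := ⟨n - 1, by omega⟩
  have h0 : (⟨0, hn⟩ : Fin (m + 1)) = 0 := rfl
  simp only [h0, add_tsub_cancel_right] at hp0 hnonzero hBE ⊢
  subst hΔ
  have hphase : IsScatteringPhase _ Θ := hΘ
  have hne : ∀ j k, expSfun ((2 - c ^ 2) / 2) (p k) (p j) ≠ 0 := fun j k =>
    hphase.expSfun_ne_zero (hpD j) (hpD k)
  have hBEprod := fun j => hphase.prod_expSfun_eq hpD (hBE j)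
  have hLM : ∏ j ∈ univ.erase 0, Lfun c (zOf p j) = ∏ j ∈ univ.erase 0, Mfun c (zOf p j) := by
    refine prod_Lfun_erase_eq_prod_Mfun_erase hp0
      (fun j hj => exp_I_mul_ne_one_of_mem_Ddom (hpD j) (hnonzero j hj)) (hp0 ▸ hne 0 0) ?_
    simpa [zOf, hp0] using hBEprod 0
  have hlim := tendsto_constWordsSum_update_zero hx0 (fun j => Complex.exp_ne_zero _)
    (by simp [hp0]) (Acoef_mul_finRotate_inv_s14 hne hBEprod) hLM
  have hε : Tendsto (fun ε : ℝ => Complex.exp (Complex.I * ε)) (𝓝[(Set.range p)ᶜ] 0) (𝓝[≠] 1) :=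
    tendsto_exp_I_mul_nhdsNE.mono_left
      (nhdsWithin_mono _ (Set.compl_subset_compl.2 (Set.singleton_subset_iff.2 ⟨0, hp0⟩)))
  refine (hlim.comp hε).congr fun ε => ?_
  rw [Function.comp_apply, zOf_update]
  rfl
end
end

section
/- Let G be the graph on the cycle ℤ_N with horizontal edges between consecutive vertices and one vertical edge below and one above each vertex. For basis vectors Ψ_x, Ψ_y, let 𝒱(Ψ_x, Ψ_y) be the set of arrow configurations on the edges of G obeying the ice rule (exactly two arrows enter and two exit each vertex of ℤ_N) whose bottom vertical arrows are given by Ψ_x (up arrow at position i iff Ψ_x(i) = +1) and whose top vertical arrows are given by Ψ_y. Then |𝒱(Ψ_x, Ψ_y)| = 2 if x = y; |𝒱(Ψ_x, Ψ_y)| = 1 if x ≠ y and x, y are interlaced; and |𝒱(Ψ_x, Ψ_y)| = 0 otherwise. -/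
open scoped BigOperators
open Complex

noncomputable section

/-- Positions (in `{1, …, N}`) of a subset of `Fin N`, in increasing order. -/
def posList {N : ℕ} (A : Finset (Fin N)) : List ℕ :=
  (A.sort (· ≤ ·)).map (fun i => (i : ℕ) + 1)

/-- `a₁ ≤ b₁ ≤ a₂ ≤ b₂ ≤ … ≤ aₙ ≤ bₙ` for two lists of the same length. -/
def seqInterlace (a b : List ℕ) : Prop :=
  ∀ i, i < a.length →
    (a.getD i 0 ≤ b.getD i 0 ∧ (i + 1 < a.length → b.getD i 0 ≤ a.getD (i + 1) 0))

/-- Interlacement of two subsets of `{1, …, N}`. -/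
def Interlaced {N : ℕ} (A B : Finset (Fin N)) : Prop :=
  A.card = B.card ∧
    (seqInterlace (posList A) (posList B) ∨ seqInterlace (posList B) (posList A))

/-- `P(Ψ_x, Ψ_y)`, the number of positions at which `Ψ_x` and `Ψ_y` differ. -/
def Pdiff {N : ℕ} (A B : Finset (Fin N)) : ℕ := (symmDiff A B).card

open scoped Classical in
/-- The transfer matrix `V` of the six-vertex model (case `a = b = 1`). -/
def transferV (N : ℕ) (c : ℝ) : Matrix (Finset (Fin N)) (Finset (Fin N)) ℂ :=
  Matrix.of fun A B =>
    if A = B then 2 else if Interlaced A B then (c : ℂ) ^ (Pdiff A B) else 0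

open scoped Classical in
/-- The ice rule at vertex `i` of the one-row graph `G`: `h` gives the horizontal arrows
(`h i` is the edge from `i` to `i+1`, `true` = pointing right), `vb`/`vt` the bottom/top
vertical arrows (`true` = pointing up); exactly two arrows enter the vertex. -/
def iceAtRow {N : ℕ} [NeZero N] (h vb vt : Fin N → Bool) (i : Fin N) : Prop :=
  ((if h (i - 1) then 1 else 0) + (if h i then 0 else 1) +
    (if vb i then 1 else 0) + (if vt i then 0 else 1) : ℕ) = 2

open scoped Classical in
/-- `𝒱(Ψ_A, Ψ_B)`: ice-rule arrow configurations on the one-row graph whose bottom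
vertical arrows are given by `Ψ_A` and top vertical arrows by `Ψ_B` (a configuration is
determined by its horizontal arrows `h`). -/
def rowConfigs {N : ℕ} [NeZero N] (A B : Finset (Fin N)) : Finset (Fin N → Bool) :=
  Finset.univ.filter fun h : Fin N → Bool =>
    ∀ i : Fin N, iceAtRow h (fun j => decide (j ∈ A)) (fun j => decide (j ∈ B)) i

/-!
Read every arrow as `0` or `1` (`1` = right or up). The ice rule at vertex `i` says
`h i - h (i - 1) = [i ∈ A] - [i ∈ B]`, so along the row the horizontal arrows follow the height
function `H t = #(A ∩ [0, t)) - #(B ∩ [0, t))`: `h i = c + H (i + 1)`, where `c` is the arrow entering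
vertex `0`. Going once around the cycle forces `H N = 0`, and conversely every `c` with
`c + H t ∈ {0, 1}` for all `t` yields a configuration. Hence configurations correspond to such
seeds `c ∈ {0, 1}`. Both seeds work iff `H ≡ 0`, i.e. `A = B`, and some seed works iff
`0 ≤ H ≤ 1` or `-1 ≤ H ≤ 0`, which is interlacing read through counting functions: the `k`-th
element of `A` is `< t` iff more than `k` elements of `A` are `< t`.
-/

open Finset

open scoped Classical in
lemma Finset.card_filter_bool (P : Bool → Prop) :
    #{c | P c} = if ∀ c, P c then 2 else if ∃ c, P c then 1 else 0 := by
  rw [card_filter, Fintype.sum_bool]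
  by_cases hf : P false <;> by_cases ht : P true <;>
    simp [Bool.forall_bool, Bool.exists_bool, hf, ht]

lemma Monotone.lt_card_filter_lt_iff {α : Type*} [LinearOrder α] {n : ℕ} {f : Fin n → α}
    (hf : Monotone f) (k : Fin n) (t : α) : (k : ℕ) < #{j | f j < t} ↔ f k < t := by
  constructor
  · intro hk
    by_contra! hle
    have hsub : ({j | f j < t} : Finset (Fin n)) ⊆ Iio k := fun j hj => by
      rw [mem_filter] at hj
      exact mem_Iio.mpr (lt_of_not_ge fun hkj => (hle.trans (hf hkj)).not_gt hj.2)
    have := card_le_card hsub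
    rw [Fin.card_Iio] at this
    omega
  · intro hk
    have hsub : Iic k ⊆ ({j | f j < t} : Finset (Fin n)) := fun j hj =>
      mem_filter.mpr ⟨mem_univ _, (hf (mem_Iic.mp hj)).trans_lt hk⟩
    have := card_le_card hsub
    rw [Fin.card_Iic] at this
    omega

lemma Fin.val_neg_one {N : ℕ} [NeZero N] : ((-1 : Fin N) : ℕ) = N - 1 := by
  obtain ⟨n, rfl⟩ := Nat.exists_eq_succ_of_ne_zero (NeZero.ne N)
  simp

lemma Int.toNat_decide_eq_one_eq_self {x : ℤ} (h0 : 0 ≤ x) (h1 : x ≤ 1) :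
    ((decide (x = 1)).toNat : ℤ) = x := by
  rcases (show x = 0 ∨ x = 1 by omega) with rfl | rfl <;> rfl

lemma forall_le_shift_iff_forall_le_add {n d : ℕ} {p q P Q : ℕ → ℕ}
    (hp : ∀ k < n, ∀ t, p k ≤ t ↔ k < P t) (hq : ∀ k < n, ∀ t, q k ≤ t ↔ k < Q t)
    (hQ : ∀ t, Q t ≤ n) :
    (∀ k, k + d < n → p k ≤ q (k + d)) ↔ ∀ t, Q t ≤ P t + d := by
  constructor
  · intro hpq t
    by_contra! hlt
    have hQt := hQ t
    have hqt : q (Q t - 1) ≤ t := (hq _ (by omega) t).mpr (by omega)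
    have hpq' := hpq (Q t - 1 - d) (by omega)
    rw [Nat.sub_add_cancel (by omega)] at hpq'
    have := (hp _ (by omega) t).mp (hpq'.trans hqt)
    omega
  · intro hQP k hk
    have := (hq (k + d) hk _).mp le_rfl
    exact (hp k (by omega) _).mpr (by have := hQP (q (k + d)); omega)

namespace RowConfigs

variable {N : ℕ}

def countBelow (A : Finset (Fin N)) (t : ℕ) : ℕ := #{i ∈ A | i.val < t}

def height (A B : Finset (Fin N)) (t : ℕ) : ℤ := countBelow A t - countBelow B t

lemma countBelow_zero (A : Finset (Fin N)) : countBelow A 0 = 0 := by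
  simp [countBelow]

lemma countBelow_of_le (A : Finset (Fin N)) {t : ℕ} (ht : N ≤ t) : countBelow A t = #A := by
  rw [countBelow, filter_true_of_mem fun i _ => i.isLt.trans_le ht]

lemma countBelow_le_card (A : Finset (Fin N)) (t : ℕ) : countBelow A t ≤ #A :=
  card_filter_le _ _

lemma countBelow_succ (A : Finset (Fin N)) (i : Fin N) :
    countBelow A (i + 1) = countBelow A i + if i ∈ A then 1 else 0 := by
  have hsplit : ∀ j ∈ A, (if (j : ℕ) < i + 1 then 1 else 0) =
      (if (j : ℕ) < i then 1 else 0) + if j = i then 1 else 0 := by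
    intro j _
    rcases lt_trichotomy j i with h | rfl | h
    · simp [h.ne, Fin.lt_def.mp h, Nat.lt_succ_of_lt (Fin.lt_def.mp h)]
    · simp
    · have hij := Fin.lt_def.mp h
      simp [h.ne', hij.not_gt, show ¬ (j : ℕ) < i + 1 by omega]
  simp only [countBelow, card_filter]
  rw [sum_congr rfl hsplit, sum_add_distrib, sum_ite_eq' A]

lemma height_zero (A B : Finset (Fin N)) : height A B 0 = 0 := by
  simp [height, countBelow_zero]

lemma height_of_le (A B : Finset (Fin N)) {t : ℕ} (ht : N ≤ t) :
    height A B t = height A B N := by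
  simp [height, countBelow_of_le _ ht, countBelow_of_le _ le_rfl]

lemma height_self (A : Finset (Fin N)) (t : ℕ) : height A A t = 0 := by
  simp [height]

lemma height_swap (A B : Finset (Fin N)) (t : ℕ) : height B A t = -height A B t := by
  simp [height]

lemma height_succ (A B : Finset (Fin N)) (i : Fin N) :
    height A B (i + 1) =
      height A B i + ((if i ∈ A then 1 else 0) - if i ∈ B then 1 else 0) := by
  simp only [height, countBelow_succ]
  push_cast
  ring

lemma height_eq_zero_iff_card_eq (A B : Finset (Fin N)) : height A B N = 0 ↔ #A = #B := by
  simp [height, countBelow_of_le _ le_rfl, sub_eq_zero]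

lemma eq_of_forall_height_eq_zero {A B : Finset (Fin N)} (h : ∀ t, height A B t = 0) : A = B := by
  ext i
  have := height_succ A B i
  rw [h, h] at this
  by_cases hA : i ∈ A <;> by_cases hB : i ∈ B <;> simp [hA, hB] at this ⊢

lemma countBelow_eq_card_filter_orderEmbOfFin (A : Finset (Fin N)) (t : ℕ) :
    countBelow A t = #{j | (A.orderEmbOfFin rfl j : ℕ) < t} := by
  conv_lhs => rw [countBelow, ← map_orderEmbOfFin_univ A rfl]
  rw [filter_map, card_map]
  rfl

lemma posList_eq_map_val (A : Finset (Fin N)) :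
    posList A = ((A.sort (· ≤ ·)).map Fin.val).map (· + 1) :=
  congrArg (List.map _) (List.flatMap_pure_eq_map Fin.val _)

lemma posList_length (A : Finset (Fin N)) : (posList A).length = #A := by
  simp [posList_eq_map_val]

lemma posList_getD {A : Finset (Fin N)} {k : ℕ} (hk : k < #A) :
    (posList A).getD k 0 = (A.orderEmbOfFin rfl ⟨k, hk⟩ : ℕ) + 1 := by
  simp [posList_eq_map_val, List.getD_eq_getElem?_getD, orderEmbOfFin_apply, hk]

lemma posList_getD_le_iff {A : Finset (Fin N)} {k : ℕ} (hk : k < #A) (t : ℕ) :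
    (posList A).getD k 0 ≤ t ↔ k < countBelow A t := by
  rw [posList_getD hk, countBelow_eq_card_filter_orderEmbOfFin, Nat.add_one_le_iff]
  exact (Monotone.lt_card_filter_lt_iff (f := fun j => (A.orderEmbOfFin rfl j : ℕ))
    (fun _ _ h => (A.orderEmbOfFin rfl).monotone h) ⟨k, hk⟩ t).symm

lemma seqInterlace_posList_iff {A B : Finset (Fin N)} (hc : #A = #B) :
    seqInterlace (posList A) (posList B) ↔ ∀ t, 0 ≤ height A B t ∧ height A B t ≤ 1 := by
  have hAB := forall_le_shift_iff_forall_le_add (d := 0) (fun k hk => posList_getD_le_iff hk)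
    (fun k hk => posList_getD_le_iff (hc ▸ hk)) (fun t => hc ▸ countBelow_le_card B t)
  have hBA := forall_le_shift_iff_forall_le_add (d := 1)
    (fun k hk => posList_getD_le_iff (hc ▸ hk)) (fun k hk => posList_getD_le_iff hk)
    (countBelow_le_card A)
  simp only [add_zero] at hAB
  rw [seqInterlace, posList_length]
  constructor
  · intro h t
    have h₁ := hAB.mp (fun k hk => (h k hk).1) t
    have h₂ := hBA.mp (fun k hk => (h k (by omega)).2 hk) t
    simp only [height]
    omega
  · intro h k hk
    have hcount :
        ∀ t, countBelow B t ≤ countBelow A t ∧ countBelow A t ≤ countBelow B t + 1 :=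
      fun t => by have := h t; simp only [height] at this; omega
    exact ⟨hAB.mpr (fun t => (hcount t).1) k hk, hBA.mpr (fun t => (hcount t).2) k⟩

-- `c` is the arrow on the edge from vertex `N - 1` to vertex `0`.
def AdmissibleSeed (A B : Finset (Fin N)) (c : Bool) : Prop :=
  height A B N = 0 ∧
    ∀ t, 0 ≤ (c.toNat : ℤ) + height A B t ∧ (c.toNat : ℤ) + height A B t ≤ 1

lemma admissibleSeed_true_iff {A B : Finset (Fin N)} :
    AdmissibleSeed A B true ↔ AdmissibleSeed B A false := by
  simp only [AdmissibleSeed, height_swap B A, neg_eq_zero, Bool.toNat_true, Bool.toNat_false]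
  refine and_congr_right fun _ => forall_congr' fun t => ?_
  constructor <;> intro h <;> push_cast at h ⊢ <;> omega

lemma interlaced_iff_exists_admissibleSeed {A B : Finset (Fin N)} :
    Interlaced A B ↔ ∃ c, AdmissibleSeed A B c := by
  rw [Bool.exists_bool, admissibleSeed_true_iff]
  simp only [Interlaced, AdmissibleSeed, Bool.toNat_false, Nat.cast_zero, zero_add,
    height_eq_zero_iff_card_eq]
  constructor
  · rintro ⟨hc, h | h⟩
    · exact Or.inl ⟨hc, (seqInterlace_posList_iff hc).mp h⟩
    · exact Or.inr ⟨hc.symm, (seqInterlace_posList_iff hc.symm).mp h⟩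
  · rintro (⟨hc, h⟩ | ⟨hc, h⟩)
    · exact ⟨hc, Or.inl ((seqInterlace_posList_iff hc).mpr h)⟩
    · exact ⟨hc.symm, Or.inr ((seqInterlace_posList_iff hc).mpr h)⟩

lemma eq_iff_forall_admissibleSeed {A B : Finset (Fin N)} :
    A = B ↔ ∀ c, AdmissibleSeed A B c := by
  constructor
  · rintro rfl c
    refine ⟨height_self A N, fun t => ?_⟩
    cases c <;> simp [height_self]
  · intro h
    refine eq_of_forall_height_eq_zero fun t => ?_
    have h₀ := (h false).2 t
    have h₁ := (h true).2 t
    simp only [Bool.toNat_false, Bool.toNat_true, Nat.cast_zero, Nat.cast_one] at h₀ h₁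
    omega

variable [NeZero N]

lemma iceAtRow_iff (A B : Finset (Fin N)) (h : Fin N → Bool) (i : Fin N) :
    iceAtRow h (fun j => decide (j ∈ A)) (fun j => decide (j ∈ B)) i ↔
      ((h i).toNat : ℤ) - height A B (i + 1) = (h (i - 1)).toNat - height A B i := by
  rw [height_succ, iceAtRow]
  cases h (i - 1) <;> cases h i <;> by_cases hA : i ∈ A <;> by_cases hB : i ∈ B <;>
    simp [hA, hB] <;> omega

lemma height_sub_one_succ {A B : Finset (Fin N)} (hN : height A B N = 0) (i : Fin N) :
    height A B ((i - 1 : Fin N) + 1) = height A B i := by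
  rcases eq_or_ne i 0 with rfl | hi
  · rw [zero_sub, Fin.val_neg_one, Nat.sub_add_cancel NeZero.one_le, hN, Fin.val_zero, height_zero]
  · rw [Fin.val_sub_one_of_ne_zero hi, Nat.sub_one_add_one (Fin.val_ne_zero_iff.mpr hi)]

lemma mem_rowConfigs_iff_forall_ice {A B : Finset (Fin N)} {h : Fin N → Bool} :
    h ∈ rowConfigs A B ↔
      ∀ i : Fin N,
        ((h i).toNat : ℤ) - height A B (i + 1) = (h (i - 1)).toNat - height A B i := by
  simp [rowConfigs, iceAtRow_iff]

lemma mem_rowConfigs_iff {A B : Finset (Fin N)} {h : Fin N → Bool} :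
    h ∈ rowConfigs A B ↔
      height A B N = 0 ∧
        ∀ i : Fin N, ((h i).toNat : ℤ) = (h (-1)).toNat + height A B (i + 1) := by
  rw [mem_rowConfigs_iff_forall_ice]
  constructor
  · intro hice
    have walk : ∀ t (ht : t < N),
        ((h ⟨t, ht⟩).toNat : ℤ) = (h (-1)).toNat + height A B (t + 1) := by
      intro t ht
      induction t with
      | zero =>
        have := hice 0
        simp only [zero_sub, Fin.val_zero, height_zero, sub_zero] at this
        rw [show (⟨0, ht⟩ : Fin N) = 0 from rfl, ← this]
        ring
      | succ t ih =>
        have hpred : (⟨t + 1, ht⟩ - 1 : Fin N) = ⟨t, by omega⟩ :=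
          Fin.ext (Fin.val_sub_one_of_ne_zero (Fin.ne_of_val_ne (Nat.succ_ne_zero t)))
        have := hice ⟨t + 1, ht⟩
        rw [hpred, ih (by omega)] at this
        simp only at this
        linarith
    have hlast : (⟨N - 1, by have := NeZero.pos N; omega⟩ : Fin N) = -1 :=
      Fin.ext Fin.val_neg_one.symm
    refine ⟨?_, fun i => walk i i.isLt⟩
    have := walk (N - 1) (by have := NeZero.pos N; omega)
    rwa [hlast, Nat.sub_add_cancel NeZero.one_le, left_eq_add] at this
  · rintro ⟨hN, hwalk⟩ i
    rw [hwalk i, hwalk (i - 1), height_sub_one_succ hN]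
    ring

def seedRow (A B : Finset (Fin N)) (c : Bool) : Fin N → Bool :=
  fun i => decide ((c.toNat : ℤ) + height A B (i + 1) = 1)

lemma admissibleSeed_of_mem_rowConfigs {A B : Finset (Fin N)} {h : Fin N → Bool}
    (hh : h ∈ rowConfigs A B) : AdmissibleSeed A B (h (-1)) := by
  obtain ⟨hN, hwalk⟩ := mem_rowConfigs_iff.mp hh
  refine ⟨hN, fun t => ?_⟩
  obtain ⟨b, hb⟩ : ∃ b : Bool, ((h (-1)).toNat : ℤ) + height A B t = b.toNat := by
    rcases Nat.lt_or_ge N t with hNt | htN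
    · exact ⟨h (-1), by rw [height_of_le A B hNt.le, hN, add_zero]⟩
    cases t with
    | zero => exact ⟨h (-1), by rw [height_zero, add_zero]⟩
    | succ s => exact ⟨h ⟨s, htN⟩, (hwalk ⟨s, htN⟩).symm⟩
  rw [hb]
  cases b <;> simp

lemma seedRow_neg_one {A B : Finset (Fin N)} {c : Bool} (hN : height A B N = 0) :
    seedRow A B c (-1) = c := by
  cases c <;> simp [seedRow, Fin.val_neg_one, Nat.sub_add_cancel NeZero.one_le, hN]

lemma seedRow_mem_rowConfigs {A B : Finset (Fin N)} {c : Bool} (hc : AdmissibleSeed A B c) :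
    seedRow A B c ∈ rowConfigs A B := by
  obtain ⟨hN, hbd⟩ := hc
  refine mem_rowConfigs_iff.mpr ⟨hN, fun i => ?_⟩
  rw [seedRow_neg_one hN, seedRow, Int.toNat_decide_eq_one_eq_self (hbd _).1 (hbd _).2]

lemma seedRow_eq_of_mem_rowConfigs {A B : Finset (Fin N)} {h : Fin N → Bool}
    (hh : h ∈ rowConfigs A B) : seedRow A B (h (-1)) = h := by
  funext i
  rw [seedRow, ← (mem_rowConfigs_iff.mp hh).2 i]
  cases h i <;> simp

open scoped Classical in
lemma card_rowConfigs_eq_card_admissibleSeed (A B : Finset (Fin N)) :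
    #(rowConfigs A B) = #{c | AdmissibleSeed A B c} :=
  card_nbij' (fun h => h (-1)) (seedRow A B)
    (fun _ hh => mem_filter.mpr ⟨mem_univ _, admissibleSeed_of_mem_rowConfigs hh⟩)
    (fun _ hc => seedRow_mem_rowConfigs (mem_filter.mp hc).2)
    (fun _ hh => seedRow_eq_of_mem_rowConfigs hh)
    (fun _ hc => seedRow_neg_one (mem_filter.mp hc).2.1)

end RowConfigs

open scoped Classical in
/-- **Lemma 4.1: the number of one-row ice configurations with prescribed vertical
boundary.** -/
theorem card_rowConfigs (N : ℕ) [NeZero N] (A B : Finset (Fin N)) :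
    (rowConfigs A B).card =
      if A = B then 2 else if Interlaced A B then 1 else 0 := by
  rw [RowConfigs.card_rowConfigs_eq_card_admissibleSeed, Finset.card_filter_bool]
  simp only [← RowConfigs.eq_iff_forall_admissibleSeed,
    ← RowConfigs.interlaced_iff_exists_admissibleSeed]
end
end
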